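/- arXiv:1209.3347 — 5 statements merged into one kernel-verified Lean document; each statement's English description precedes it below -/
import Mathlib

section
/- The algebra H generated by p_i, q_i (i ≥ 1) with relations p_i p_j = p_j p_i, q_i q_j = q_j q_i, p_i q_j = q_j p_i + δ_{ij}·1 is isomorphic to the algebra H' generated by a_i, b_i (i ≥ 1, a_0 = b_0 = 1) with relations a_i a_j = a_j a_i, b_i b_j = b_j b_i, a_i b_j = Σ_{k=0}^{min(i,j)} b_{j−k} a_{i−k}. -/
open FreeAlgebra

/-- Generators `p_i`, `q_i` (`i ≥ 1`) of the Heisenberg algebra `H`. -/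
abbrev HGen := ℕ+ ⊕ ℕ+

noncomputable def pGen (i : ℕ+) : FreeAlgebra ℂ HGen := ι ℂ (Sum.inl i)
noncomputable def qGen (i : ℕ+) : FreeAlgebra ℂ HGen := ι ℂ (Sum.inr i)

/-- The defining relations of `H`: `p_i p_j = p_j p_i`, `q_i q_j = q_j q_i`,
`p_i q_j = q_j p_i + δ_{ij}·1`. -/
inductive relH : FreeAlgebra ℂ HGen → FreeAlgebra ℂ HGen → Prop
  | pp (i j : ℕ+) : relH (pGen i * pGen j) (pGen j * pGen i)
  | qq (i j : ℕ+) : relH (qGen i * qGen j) (qGen j * qGen i)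
  | pq (i j : ℕ+) :
      relH (pGen i * qGen j) (qGen j * pGen i + if i = j then 1 else 0)

/-- Generators `a_i`, `b_i` (`i ≥ 1`) of `H'`. -/
abbrev HpGen := ℕ+ ⊕ ℕ+

/-- `a_n` for `n : ℕ`, with the convention `a_0 = 1`. -/
noncomputable def aGen (n : ℕ) : FreeAlgebra ℂ HpGen :=
  if h : 0 < n then ι ℂ (Sum.inl (⟨n, h⟩ : ℕ+)) else 1

/-- `b_n` for `n : ℕ`, with the convention `b_0 = 1`. -/
noncomputable def bGen (n : ℕ) : FreeAlgebra ℂ HpGen :=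
  if h : 0 < n then ι ℂ (Sum.inr (⟨n, h⟩ : ℕ+)) else 1

/-- The defining relations of `H'`: `a_i a_j = a_j a_i`, `b_i b_j = b_j b_i`,
`a_i b_j = Σ_{k=0}^{min(i,j)} b_{j-k} a_{i-k}` (with `a_0 = b_0 = 1`). -/
inductive relHp : FreeAlgebra ℂ HpGen → FreeAlgebra ℂ HpGen → Prop
  | aa (i j : ℕ+) : relHp (aGen i * aGen j) (aGen j * aGen i)
  | bb (i j : ℕ+) : relHp (bGen i * bGen j) (bGen j * bGen i)
  | ab (i j : ℕ+) :
      relHp (aGen i * bGen j)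
        (∑ k ∈ Finset.range (min (i : ℕ) (j : ℕ) + 1),
          bGen ((j : ℕ) - k) * aGen ((i : ℕ) - k))

/-!
Encode `aₙ` and `bₙ` as the coefficients of `A(z) = exp (∑ₖ pₖ zᵏ / k)` and
`B(w) = exp (∑ₖ qₖ wᵏ)`, i.e. through the Newton identities `n aₙ = ∑ₖ pₖ aₙ₋ₖ` and
`n bₙ = ∑ₖ k qₖ bₙ₋ₖ`. Over `ℚ` these identities can be solved for either side, so the two
substitutions are mutually inverse once each set of relations is shown to imply the other.

In generating functions the relations of `H'` say `A(z) B(w) (1 - z w) = B(w) A(z)`. Since a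
commutator with a fixed element is a derivation, `[pᵢ, qⱼ] = δᵢⱼ` is equivalent to
`[pᵢ, B(w)] = wⁱ B(w)`, and this in turn to `[A(z), B(w)] = z w A(z) B(w)`. Both equivalences
compare two solutions of the Newton recursion linearised along a derivation `D`: the solution
`D (exp Y)` is determined by the variation `D Y` of the exponent, and it determines `D Y` back.
-/

open Finset

section Newton

variable {R : Type*} [Ring R]

theorem Ring.lie_smul {S : Type*} [Monoid S] [DistribMulAction S R] [IsScalarTower S R R]
    [SMulCommClass S R R] (c : S) (u v : R) : ⁅u, c • v⁆ = c • ⁅u, v⁆ := by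
  rw [Ring.lie_def, Ring.lie_def, mul_smul_comm, smul_mul_assoc, smul_sub]

def seqShift {M : Type*} [Zero M] (i : ℕ) (f : ℕ → M) (n : ℕ) : M :=
  if i ≤ n then f (n - i) else 0

theorem sum_mul_seqShift (y f : ℕ → R) (i n : ℕ) :
    ∑ k ∈ range (n + 1), y (k + 1) * seqShift i f (n - k) =
      ∑ k ∈ range (n + 1 - i), y (k + 1) * f (n - i - k) := by
  rw [← sum_range_add_sum_Ico _ (show n + 1 - i ≤ n + 1 by omega), add_eq_left.mpr <|
    sum_eq_zero fun k hk => by simp [seqShift, show ¬ i ≤ n - k by simp at hk; omega]]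
  exact sum_congr rfl fun k hk => by
    simp only [mem_range] at hk
    simp [seqShift, show i ≤ n - k by omega, show n - k - i = n - i - k by omega]

theorem sum_range_succ_ite_le {M : Type*} [AddCommMonoid M] (F : ℕ → M) (n m : ℕ) :
    ∑ k ∈ range (n + 1), (if k ≤ m then F k else 0) = ∑ k ∈ range (min n m + 1), F k := by
  rw [← sum_filter]
  congr 1
  ext k
  simp only [mem_filter, mem_range]
  omega

/-- In generating functions, `E(z) F(w) = F(w) E(z) / (1 - z w)`. -/
def ExchangeRelation (e f : ℕ → R) : Prop :=
  ∀ i j, e i * f j = ∑ k ∈ range (min i j + 1), f (j - k) * e (i - k)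

theorem sum_range_min_succ_succ (e f : ℕ → R) (i j : ℕ) :
    ∑ k ∈ range (min (i + 1) (j + 1) + 1), f (j + 1 - k) * e (i + 1 - k) =
      f (j + 1) * e (i + 1) + ∑ k ∈ range (min i j + 1), f (j - k) * e (i - k) := by
  rw [Nat.succ_min_succ, sum_range_succ', add_comm]
  simp

theorem succ_eq_of_sum_mul_eq {a b f : ℕ → R} (hf : f 0 = 1)
    (h : ∀ n, ∑ k ∈ range (n + 1), a (k + 1) * f (n - k) =
      ∑ k ∈ range (n + 1), b (k + 1) * f (n - k))
    (n : ℕ) : a (n + 1) = b (n + 1) := by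
  induction n using Nat.strong_induction_on with
  | _ n ih =>
    have hn := h n
    rw [sum_range_succ, sum_range_succ, Nat.sub_self, hf, mul_one, mul_one,
      sum_congr rfl fun k hk => by rw [ih k (mem_range.mp hk)]] at hn
    exact add_left_cancel hn

def IsNewtonPair (y f : ℕ → R) : Prop :=
  f 0 = 1 ∧ ∀ n, (n + 1) • f (n + 1) = ∑ k ∈ range (n + 1), y (k + 1) * f (n - k)

def newtonLog (f : ℕ → R) : ℕ → R
  | 0 => 0
  | n + 1 => (n + 1) • f (n + 1) - ∑ k : Fin n, newtonLog f (k + 1) * f (n - k)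

theorem newtonLog_succ (f : ℕ → R) (n : ℕ) :
    newtonLog f (n + 1) = (n + 1) • f (n + 1) - ∑ k ∈ range n, newtonLog f (k + 1) * f (n - k) := by
  rw [newtonLog, Fin.sum_univ_eq_sum_range (fun k => newtonLog f (k + 1) * f (n - k))]

theorem isNewtonPair_newtonLog {f : ℕ → R} (hf : f 0 = 1) : IsNewtonPair (newtonLog f) f := by
  refine ⟨hf, fun n => ?_⟩
  rw [sum_range_succ, Nat.sub_self, hf, mul_one, newtonLog_succ]
  abel

namespace IsNewtonPair

variable {y y' f : ℕ → R}

theorem succ_eq (h : IsNewtonPair y f) (h' : IsNewtonPair y' f) (n : ℕ) : y (n + 1) = y' (n + 1) :=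
  succ_eq_of_sum_mul_eq h.1 (fun n => by rw [← h.2, ← h'.2]) n

theorem nsmul_eq (h : IsNewtonPair y f) (n : ℕ) :
    n • f n = ∑ k ∈ range n, y (k + 1) * f (n - 1 - k) := by
  cases n with
  | zero => simp
  | succ n => simpa using h.2 n

theorem map {S F : Type*} [Ring S] [FunLike F R S] [RingHomClass F R S] (h : IsNewtonPair y f)
    (φ : F) : IsNewtonPair (φ ∘ y) (φ ∘ f) :=
  ⟨by simp [h.1], fun n => by simp only [Function.comp_apply, ← map_nsmul, h.2, map_sum, map_mul]⟩

end IsNewtonPair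

theorem map_newtonLog {S F : Type*} [Ring S] [FunLike F R S] [RingHomClass F R S] (φ : F)
    {f : ℕ → R} (hf : f 0 = 1) (n : ℕ) : φ (newtonLog f (n + 1)) = newtonLog (φ ∘ f) (n + 1) :=
  ((isNewtonPair_newtonLog hf).map φ).succ_eq (isNewtonPair_newtonLog (by simp [hf])) n

theorem Commute.newtonLog_right {u : R} {f : ℕ → R} (h : ∀ k, Commute u (f k)) (n : ℕ) :
    Commute u (newtonLog f n) := by
  induction n using Nat.strong_induction_on with
  | _ n ih =>
    cases n with
    | zero => simp [newtonLog]
    | succ n =>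
      rw [newtonLog_succ]
      exact ((h _).smul_right _).sub_right
        (.sum_right _ _ _ fun k hk => (ih (k + 1) (by simp at hk; omega)).mul_right (h _))

theorem commute_newtonLog {f : ℕ → R} (h : ∀ i j, Commute (f i) (f j)) (m n : ℕ) :
    Commute (newtonLog f m) (newtonLog f n) :=
  .newtonLog_right (fun k => (Commute.newtonLog_right (h k) m).symm) n

variable [Algebra ℚ R]

theorem succ_nsmul_injective (n : ℕ) : Function.Injective fun a : R => (n + 1) • a := by
  intro a b h
  have h' := congrArg (fun c : R => ((n + 1 : ℚ))⁻¹ • c) h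
  simp only [← Nat.cast_smul_eq_nsmul ℚ, smul_smul] at h'
  push_cast at h'
  rwa [inv_mul_cancel₀ (by positivity), one_smul, one_smul] at h'

theorem eq_of_succ_nsmul_eq {y s u v : ℕ → R} (h0 : u 0 = v 0)
    (hu : ∀ n, (n + 1) • u (n + 1) = s n + ∑ k ∈ range (n + 1), y (k + 1) * u (n - k))
    (hv : ∀ n, (n + 1) • v (n + 1) = s n + ∑ k ∈ range (n + 1), y (k + 1) * v (n - k)) :
    u = v := by
  funext n
  induction n using Nat.strong_induction_on with
  | _ n ih =>
    cases n with
    | zero => exact h0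
    | succ n =>
      refine succ_nsmul_injective n ?_
      simp only [hu, hv]
      congr 1
      exact sum_congr rfl fun k _ => by rw [ih (n - k) (by omega)]

/-- The coefficients of `F = exp (∑ₖ y k * zᵏ / k)`, computed from the Newton identity `F' = Y F`
with `Y = ∑ₖ y (k + 1) * zᵏ`. -/
noncomputable def newtonExp (y : ℕ → R) : ℕ → R
  | 0 => 1
  | n + 1 => ((n + 1 : ℚ))⁻¹ • ∑ k ∈ range (n + 1), y (k + 1) * newtonExp y (n - k)

@[simp]
theorem newtonExp_zero (y : ℕ → R) : newtonExp y 0 = 1 := by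
  rw [newtonExp]

theorem newtonExp_succ (y : ℕ → R) (n : ℕ) :
    newtonExp y (n + 1) =
      ((n + 1 : ℚ))⁻¹ • ∑ k ∈ range (n + 1), y (k + 1) * newtonExp y (n - k) := by
  rw [newtonExp]

theorem isNewtonPair_newtonExp (y : ℕ → R) : IsNewtonPair y (newtonExp y) := by
  refine ⟨newtonExp_zero y, fun n => ?_⟩
  rw [newtonExp_succ, ← Nat.cast_smul_eq_nsmul ℚ, smul_smul]
  push_cast
  rw [mul_inv_cancel₀ (by positivity), one_smul]

theorem IsNewtonPair.eq_newtonExp {y f : ℕ → R} (h : IsNewtonPair y f) : f = newtonExp y := by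
  refine eq_of_succ_nsmul_eq (y := y) (s := 0) (by rw [h.1, newtonExp_zero]) (fun n => ?_)
    (fun n => ?_)
  · rw [h.2, Pi.zero_apply, zero_add]
  · rw [(isNewtonPair_newtonExp y).2, Pi.zero_apply, zero_add]

theorem newtonExp_newtonLog {f : ℕ → R} (hf : f 0 = 1) : newtonExp (newtonLog f) = f :=
  (isNewtonPair_newtonLog hf).eq_newtonExp.symm

theorem newtonLog_newtonExp (y : ℕ → R) (n : ℕ) : newtonLog (newtonExp y) (n + 1) = y (n + 1) :=
  (isNewtonPair_newtonLog (newtonExp_zero y)).succ_eq (isNewtonPair_newtonExp y) n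

theorem newtonExp_congr {y y' : ℕ → R} (h : ∀ n, y (n + 1) = y' (n + 1)) :
    newtonExp y = newtonExp y' := by
  refine IsNewtonPair.eq_newtonExp ⟨newtonExp_zero y, fun n => ?_⟩
  simp only [← h, (isNewtonPair_newtonExp y).2]

theorem map_newtonExp {S F : Type*} [Ring S] [Algebra ℚ S] [FunLike F R S] [RingHomClass F R S]
    (φ : F) (y : ℕ → R) (n : ℕ) : φ (newtonExp y n) = newtonExp (φ ∘ y) n :=
  congrFun ((isNewtonPair_newtonExp y).map φ).eq_newtonExp n

theorem Commute.newtonExp_right {u : R} {y : ℕ → R} (h : ∀ k, Commute u (y (k + 1))) (n : ℕ) :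
    Commute u (newtonExp y n) := by
  induction n using Nat.strong_induction_on with
  | _ n ih =>
    cases n with
    | zero => simp
    | succ n =>
      rw [newtonExp_succ]
      exact .smul_right (.sum_right _ _ _ fun k _ => (h k).mul_right (ih (n - k) (by omega))) _

theorem commute_newtonExp {y : ℕ → R} (h : ∀ i j, Commute (y (i + 1)) (y (j + 1))) (m n : ℕ) :
    Commute (newtonExp y m) (newtonExp y n) :=
  .newtonExp_right (fun k => (Commute.newtonExp_right (h k) m).symm) n

end Newton

section Variation

variable {R : Type*} [Ring R] [Algebra ℚ R]

/-- `g` is the first-order variation of `newtonExp y` as `y` moves in the direction `c`: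
`newtonExp (y + ε c) = newtonExp y + ε g + O(ε²)`. -/
def IsNewtonVariation (y c g : ℕ → R) : Prop :=
  g 0 = 0 ∧ ∀ n, (n + 1) • g (n + 1) =
    ∑ k ∈ range (n + 1), (c (k + 1) * newtonExp y (n - k) + y (k + 1) * g (n - k))

namespace IsNewtonVariation

variable {y c c' g g' : ℕ → R}

theorem eq (h : IsNewtonVariation y c g) (h' : IsNewtonVariation y c g') : g = g' := by
  refine eq_of_succ_nsmul_eq (y := y)
    (s := fun n => ∑ k ∈ range (n + 1), c (k + 1) * newtonExp y (n - k))
    (h.1.trans h'.1.symm) (fun n => ?_) (fun n => ?_)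
  · rw [h.2, sum_add_distrib]
  · rw [h'.2, sum_add_distrib]

theorem succ_eq (h : IsNewtonVariation y c g) (h' : IsNewtonVariation y c' g) (n : ℕ) :
    c (n + 1) = c' (n + 1) := by
  refine succ_eq_of_sum_mul_eq (newtonExp_zero y) (fun n => ?_) n
  have e := (h.2 n).symm.trans (h'.2 n)
  rwa [sum_add_distrib, sum_add_distrib, add_left_inj] at e

end IsNewtonVariation

theorem isNewtonVariation_of_leibniz (D : R →+ R) (hD : ∀ a b, D (a * b) = D a * b + a * D b)
    (y : ℕ → R) : IsNewtonVariation y (fun k => D (y k)) (fun n => D (newtonExp y n)) := by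
  refine ⟨by simpa using hD 1 1, fun n => ?_⟩
  rw [← map_nsmul, (isNewtonPair_newtonExp y).2, map_sum]
  exact sum_congr rfl fun k _ => hD _ _

theorem isNewtonVariation_seqShift {y c : ℕ → R} (i : ℕ)
    (hc : ∀ j, c (j + 1) = if i = j then (i + 1 : R) else 0) :
    IsNewtonVariation y c (seqShift (i + 1) (newtonExp y)) := by
  refine ⟨by simp [seqShift], fun n => ?_⟩
  rw [sum_add_distrib, sum_mul_seqShift]
  simp only [hc, ite_mul, zero_mul, sum_ite_eq, mem_range]
  by_cases hin : i ≤ n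
  · have hN := (isNewtonPair_newtonExp y).nsmul_eq (n - i)
    rw [if_pos (by omega), show n + 1 - (i + 1) = n - i by omega,
      show n - (i + 1) = n - i - 1 by omega, ← hN, seqShift, if_pos (by omega),
      show n + 1 - (i + 1) = n - i by omega, ← Nat.cast_succ, ← nsmul_eq_mul, ← add_nsmul,
      show i + 1 + (n - i) = n + 1 by omega]
  · simp [seqShift, hin, show ¬ i + 1 ≤ n + 1 by omega, show n + 1 - (i + 1) = 0 by omega]

theorem isNewtonVariation_lie_left (u : R) (y : ℕ → R) :
    IsNewtonVariation y (fun k => ⁅u, y k⁆) (fun n => ⁅u, newtonExp y n⁆) :=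
  isNewtonVariation_of_leibniz
    (.mk' (fun a => ⁅u, a⁆) fun a b => by simp only [Ring.lie_def]; noncomm_ring)
    (fun a b => by simp only [AddMonoidHom.mk'_apply, Ring.lie_def]; noncomm_ring) y

theorem isNewtonVariation_lie_right (v : R) (x : ℕ → R) :
    IsNewtonVariation x (fun k => ⁅x k, v⁆) (fun n => ⁅newtonExp x n, v⁆) :=
  isNewtonVariation_of_leibniz
    (.mk' (fun a => ⁅a, v⁆) fun a b => by simp only [Ring.lie_def]; noncomm_ring)
    (fun a b => by simp only [AddMonoidHom.mk'_apply, Ring.lie_def]; noncomm_ring) x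

theorem lie_eq_ite_iff_lie_newtonExp (u : R) (y : ℕ → R) (i : ℕ) :
    (∀ j, ⁅u, y (j + 1)⁆ = if i = j then (i + 1 : R) else 0) ↔
      ∀ m, ⁅u, newtonExp y m⁆ = seqShift (i + 1) (newtonExp y) m := by
  constructor
  · intro h
    exact congrFun ((isNewtonVariation_lie_left u y).eq (isNewtonVariation_seqShift i h))
  · intro h j
    have hvar : IsNewtonVariation y (fun k => if k = i + 1 then (i + 1 : R) else 0)
        (fun n => ⁅u, newtonExp y n⁆) := by
      rw [funext h]
      exact isNewtonVariation_seqShift i fun j => by simp [eq_comm]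
    simpa [eq_comm] using (isNewtonVariation_lie_left u y).succ_eq hvar j

theorem isNewtonVariation_seqShift_mul {x f c : ℕ → R} {m : ℕ}
    (hrel : ∀ n, newtonExp x n * f m = ∑ k ∈ range (min n m + 1), f (m - k) * newtonExp x (n - k))
    (hc : ∀ k, c (k + 1) = seqShift (k + 1) f (m + 1)) :
    IsNewtonVariation x c (seqShift 1 fun n => newtonExp x n * f m) := by
  refine ⟨by simp [seqShift], fun n => ?_⟩
  have hfirst : ∑ k ∈ range (n + 1), c (k + 1) * newtonExp x (n - k) = newtonExp x n * f m := by
    simp only [hc, seqShift, add_le_add_iff_right, Nat.add_sub_add_right, ite_mul, zero_mul]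
    rw [sum_range_succ_ite_le, hrel]
  rw [sum_add_distrib, hfirst, sum_mul_seqShift]
  simp only [← mul_assoc, ← sum_mul, Nat.add_sub_cancel]
  rw [← (isNewtonPair_newtonExp x).nsmul_eq, seqShift, if_pos (by omega), Nat.add_sub_cancel,
    smul_mul_assoc, succ_nsmul']

theorem lie_eq_seqShift_iff_exchangeRelation {x f : ℕ → R} (hf : f 0 = 1) :
    (∀ i m, ⁅x (i + 1), f m⁆ = seqShift (i + 1) f m) ↔ ExchangeRelation (newtonExp x) f := by
  constructor
  · intro hM i j
    induction j generalizing i with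
    | zero => simp [hf]
    | succ m ih =>
      have hlie := (isNewtonVariation_lie_right (f (m + 1)) x).eq
        (isNewtonVariation_seqShift_mul ih fun k => hM k (m + 1))
      cases i with
      | zero => simp
      | succ n =>
        rw [sum_range_min_succ_succ, ← ih n, ← sub_eq_iff_eq_add', ← Ring.lie_def, congrFun hlie]
        simp [seqShift]
  · intro hrel i m
    cases m with
    | zero => simp [hf, seqShift, Ring.lie_def]
    | succ m =>
      have hlie :
          (fun n => ⁅newtonExp x n, f (m + 1)⁆) = seqShift 1 fun n => newtonExp x n * f m := by
        funext n
        cases n with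
        | zero => simp [seqShift, Ring.lie_def]
        | succ n =>
          rw [Ring.lie_def, hrel, sum_range_min_succ_succ, ← hrel]
          simp [seqShift]
      have hvar := isNewtonVariation_seqShift_mul (c := fun k => seqShift k f (m + 1))
        (hrel · m) fun _ => rfl
      rw [← hlie] at hvar
      exact (isNewtonVariation_lie_right (f (m + 1)) x).succ_eq hvar i

theorem lie_eq_ite_iff_exchangeRelation (x y : ℕ → R) :
    (∀ i j, ⁅x (i + 1), y (j + 1)⁆ = if i = j then (i + 1 : R) else 0) ↔
      ExchangeRelation (newtonExp x) (newtonExp y) :=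
  (forall_congr' fun i => lie_eq_ite_iff_lie_newtonExp (x (i + 1)) y i).trans
    (lie_eq_seqShift_iff_exchangeRelation (newtonExp_zero y))

end Variation

namespace Heisenberg

-- `Nat.toPNat' 0 = 1`: only the values at positive indices are the generators.
noncomputable def p (n : ℕ) : RingQuot relH := RingQuot.mkAlgHom ℂ relH (pGen n.toPNat')

noncomputable def q (n : ℕ) : RingQuot relH := RingQuot.mkAlgHom ℂ relH (qGen n.toPNat')

noncomputable def a (n : ℕ) : RingQuot relHp := RingQuot.mkAlgHom ℂ relHp (aGen n)

noncomputable def b (n : ℕ) : RingQuot relHp := RingQuot.mkAlgHom ℂ relHp (bGen n)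

theorem a_zero : a 0 = 1 := by simp [a, aGen]

theorem b_zero : b 0 = 1 := by simp [b, bGen]

theorem commute_p (i j : ℕ) : Commute (p (i + 1)) (p (j + 1)) := by
  have h := RingQuot.mkAlgHom_rel ℂ (relH.pp i.succPNat j.succPNat)
  rw [map_mul, map_mul] at h
  exact h

theorem commute_q (i j : ℕ) : Commute (q (i + 1)) (q (j + 1)) := by
  have h := RingQuot.mkAlgHom_rel ℂ (relH.qq i.succPNat j.succPNat)
  rw [map_mul, map_mul] at h
  exact h

theorem lie_p_q (i j : ℕ) : ⁅p (i + 1), q (j + 1)⁆ = if i = j then 1 else 0 := by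
  have h := RingQuot.mkAlgHom_rel ℂ (relH.pq i.succPNat j.succPNat)
  rw [map_mul, map_add, map_mul, apply_ite (RingQuot.mkAlgHom ℂ relH), map_one, map_zero] at h
  simp only [Nat.succPNat_inj] at h
  rw [Ring.lie_def, sub_eq_iff_eq_add']
  exact h

theorem commute_a (i j : ℕ) : Commute (a i) (a j) := by
  rcases i with _ | i
  · simp [a_zero]
  rcases j with _ | j
  · simp [a_zero]
  have h := RingQuot.mkAlgHom_rel ℂ (relHp.aa i.succPNat j.succPNat)
  rw [map_mul, map_mul] at h
  exact h

theorem commute_b (i j : ℕ) : Commute (b i) (b j) := by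
  rcases i with _ | i
  · simp [b_zero]
  rcases j with _ | j
  · simp [b_zero]
  have h := RingQuot.mkAlgHom_rel ℂ (relHp.bb i.succPNat j.succPNat)
  rw [map_mul, map_mul] at h
  exact h

theorem exchangeRelation_a_b : ExchangeRelation a b := by
  rintro (_ | i) (_ | j)
  · simp [a_zero, b_zero]
  · simp [a_zero]
  · simp [b_zero]
  have h := RingQuot.mkAlgHom_rel ℂ (relHp.ab i.succPNat j.succPNat)
  simp only [map_mul, map_sum] at h
  exact h

section Lift

variable {A : Type*} [Ring A] [Algebra ℂ A]

theorem lift_aGen {e f : ℕ → A} (he : e 0 = 1) (n : ℕ) :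
    FreeAlgebra.lift ℂ (Sum.elim (fun i : ℕ+ => e i) (fun i : ℕ+ => f i)) (aGen n) = e n := by
  rcases n with _ | n
  · simp [aGen, he]
  · rw [aGen, dif_pos n.succ_pos, FreeAlgebra.lift_ι_apply]
    rfl

theorem lift_bGen {e f : ℕ → A} (hf : f 0 = 1) (n : ℕ) :
    FreeAlgebra.lift ℂ (Sum.elim (fun i : ℕ+ => e i) (fun i : ℕ+ => f i)) (bGen n) = f n := by
  rcases n with _ | n
  · simp [bGen, hf]
  · rw [bGen, dif_pos n.succ_pos, FreeAlgebra.lift_ι_apply]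
    rfl

noncomputable def liftCCR (x y : ℕ → A) (hx : ∀ i j, Commute (x (i + 1)) (x (j + 1)))
    (hy : ∀ i j, Commute (y (i + 1)) (y (j + 1)))
    (hxy : ∀ i j, ⁅x (i + 1), y (j + 1)⁆ = if i = j then 1 else 0) : RingQuot relH →ₐ[ℂ] A :=
  RingQuot.liftAlgHom ℂ ⟨FreeAlgebra.lift ℂ (Sum.elim (fun i => x i) (fun i => y i)), by
    rintro _ _ (⟨i, j⟩ | ⟨i, j⟩ | ⟨i, j⟩) <;>
      rw [← PNat.succPNat_natPred i, ← PNat.succPNat_natPred j]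
    · simpa [pGen] using (hx i.natPred j.natPred).eq
    · simpa [qGen] using (hy i.natPred j.natPred).eq
    · have h := hxy i.natPred j.natPred
      rw [Ring.lie_def, sub_eq_iff_eq_add'] at h
      simpa [pGen, qGen, apply_ite] using h⟩

theorem liftCCR_p {x y : ℕ → A} (hx hy hxy) (n : ℕ) :
    liftCCR x y hx hy hxy (p (n + 1)) = x (n + 1) := by
  simp [liftCCR, p, pGen]

theorem liftCCR_q {x y : ℕ → A} (hx hy hxy) (n : ℕ) :
    liftCCR x y hx hy hxy (q (n + 1)) = y (n + 1) := by
  simp [liftCCR, q, qGen]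

noncomputable def liftExchange (e f : ℕ → A) (he : e 0 = 1) (hf : f 0 = 1)
    (hee : ∀ i j, Commute (e i) (e j)) (hff : ∀ i j, Commute (f i) (f j))
    (hef : ExchangeRelation e f) : RingQuot relHp →ₐ[ℂ] A :=
  RingQuot.liftAlgHom ℂ ⟨FreeAlgebra.lift ℂ (Sum.elim (fun i => e i) (fun i => f i)), by
    rintro _ _ (⟨i, j⟩ | ⟨i, j⟩ | ⟨i, j⟩)
    · simpa [lift_aGen he] using (hee i j).eq
    · simpa [lift_bGen hf] using (hff i j).eq
    · simpa [lift_aGen he, lift_bGen hf] using hef i j⟩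

theorem liftExchange_a {e f : ℕ → A} (he hf hee hff hef) (n : ℕ) :
    liftExchange e f he hf hee hff hef (a n) = e n := by
  simp [liftExchange, a, lift_aGen he]

theorem liftExchange_b {e f : ℕ → A} (he hf hee hff hef) (n : ℕ) :
    liftExchange e f he hf hee hff hef (b n) = f n := by
  simp [liftExchange, b, lift_bGen hf]

theorem algHom_ext_ccr {f g : RingQuot relH →ₐ[ℂ] A} (hp : ∀ n, f (p (n + 1)) = g (p (n + 1)))
    (hq : ∀ n, f (q (n + 1)) = g (q (n + 1))) : f = g := by
  refine RingQuot.ringQuot_ext' ℂ f g (FreeAlgebra.hom_ext (funext fun i => ?_))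
  rcases i with i | i <;> rw [← PNat.succPNat_natPred i]
  · exact hp i.natPred
  · exact hq i.natPred

theorem algHom_ext_exchange {f g : RingQuot relHp →ₐ[ℂ] A}
    (ha : ∀ n, f (a (n + 1)) = g (a (n + 1))) (hb : ∀ n, f (b (n + 1)) = g (b (n + 1))) :
    f = g := by
  refine RingQuot.ringQuot_ext' ℂ f g (FreeAlgebra.hom_ext (funext fun i => ?_))
  rcases i with i | i <;> rw [← PNat.succPNat_natPred i]
  · exact ha i.natPred
  · exact hb i.natPred

end Lift

theorem lie_p_nsmul_q (i j : ℕ) :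
    ⁅p (i + 1), (j + 1) • q (j + 1)⁆ = if i = j then (i + 1 : RingQuot relH) else 0 := by
  rw [Ring.lie_smul (R := RingQuot relH), lie_p_q]
  split_ifs with h
  · simp [h]
  · simp

theorem lie_newtonLog_a_inv_smul_newtonLog_b (i j : ℕ) :
    ⁅newtonLog a (i + 1), ((j + 1 : ℕ) : ℂ)⁻¹ • newtonLog b (j + 1)⁆ = if i = j then 1 else 0 := by
  have h := (lie_eq_ite_iff_exchangeRelation (newtonLog a) (newtonLog b)).mpr
    (by rw [newtonExp_newtonLog a_zero, newtonExp_newtonLog b_zero]; exact exchangeRelation_a_b) i j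
  rw [Ring.lie_smul (R := RingQuot relHp), h]
  split_ifs with hij
  · subst hij
    rw [← Nat.cast_succ, ← map_natCast (algebraMap ℂ (RingQuot relHp)),
      Algebra.algebraMap_eq_smul_one, inv_smul_smul₀ (Nat.cast_ne_zero.mpr i.succ_ne_zero)]
  · simp

noncomputable def newtonExpHom : RingQuot relHp →ₐ[ℂ] RingQuot relH :=
  liftExchange (newtonExp p) (newtonExp fun n => n • q n) (newtonExp_zero _) (newtonExp_zero _)
    (commute_newtonExp commute_p)
    (commute_newtonExp fun i j => ((commute_q i j).smul_left _).smul_right _)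
    ((lie_eq_ite_iff_exchangeRelation _ _).mp lie_p_nsmul_q)

noncomputable def newtonLogHom : RingQuot relH →ₐ[ℂ] RingQuot relHp :=
  liftCCR (newtonLog a) (fun n => (n : ℂ)⁻¹ • newtonLog b n)
    (fun _ _ => commute_newtonLog commute_a _ _)
    (fun _ _ => ((commute_newtonLog commute_b _ _).smul_left _).smul_right _)
    lie_newtonLog_a_inv_smul_newtonLog_b

theorem newtonExpHom_comp_a : newtonExpHom ∘ a = newtonExp p :=
  funext fun _ => liftExchange_a ..

theorem newtonExpHom_comp_b : newtonExpHom ∘ b = newtonExp fun n => n • q n :=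
  funext fun _ => liftExchange_b ..

theorem newtonLogHom_p (n : ℕ) : newtonLogHom (p (n + 1)) = newtonLog a (n + 1) :=
  liftCCR_p ..

theorem newtonLogHom_q (n : ℕ) :
    newtonLogHom (q (n + 1)) = ((n + 1 : ℕ) : ℂ)⁻¹ • newtonLog b (n + 1) :=
  liftCCR_q ..

theorem newtonLogHom_comp_newtonExpHom : newtonLogHom.comp newtonExpHom = AlgHom.id ℂ _ := by
  refine algHom_ext_exchange (fun n => ?_) (fun n => ?_) <;>
    rw [AlgHom.comp_apply, AlgHom.id_apply, ← Function.comp_apply (f := newtonExpHom)]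
  · rw [newtonExpHom_comp_a, map_newtonExp, newtonExp_congr (y' := newtonLog a) newtonLogHom_p,
      newtonExp_newtonLog a_zero]
  · rw [newtonExpHom_comp_b, map_newtonExp, newtonExp_congr (y' := newtonLog b) fun k => ?_,
      newtonExp_newtonLog b_zero]
    rw [Function.comp_apply, map_nsmul, newtonLogHom_q, ← Nat.cast_smul_eq_nsmul ℂ,
      smul_inv_smul₀ (Nat.cast_ne_zero.mpr k.succ_ne_zero)]

theorem newtonExpHom_comp_newtonLogHom : newtonExpHom.comp newtonLogHom = AlgHom.id ℂ _ := by
  refine algHom_ext_ccr (fun n => ?_) (fun n => ?_) <;> rw [AlgHom.comp_apply, AlgHom.id_apply]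
  · rw [newtonLogHom_p, map_newtonLog _ a_zero, newtonExpHom_comp_a, newtonLog_newtonExp]
  · rw [newtonLogHom_q, map_smul, map_newtonLog _ b_zero, newtonExpHom_comp_b, newtonLog_newtonExp,
      ← Nat.cast_smul_eq_nsmul ℂ, inv_smul_smul₀ (Nat.cast_ne_zero.mpr n.succ_ne_zero)]

end Heisenberg

/-- The algebra `H` (the quotient of the universal enveloping
algebra of the infinite-dimensional Heisenberg Lie algebra by `c = 1`,
presented by generators `p_i, q_i` with relations `p_i p_j = p_j p_i`,
`q_i q_j = q_j q_i`, `p_i q_j = q_j p_i + δ_{ij}`) is isomorphic to the algebra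
`H'` presented by generators `a_i, b_i` with relations `a_i a_j = a_j a_i`,
`b_i b_j = b_j b_i`, `a_i b_j = Σ_{k=0}^{min(i,j)} b_{j-k} a_{i-k}`. -/
theorem heisenberg_presentations_isomorphic :
    Nonempty (RingQuot relH ≃ₐ[ℂ] RingQuot relHp) :=
  ⟨.ofAlgHom Heisenberg.newtonLogHom Heisenberg.newtonExpHom
    Heisenberg.newtonLogHom_comp_newtonExpHom Heisenberg.newtonExpHom_comp_newtonLogHom⟩
end

section
/- For a matrix M ∈ Θ parametrizing a GL(V)-orbit O_M on pairs of flags of the same multi-composition type, dim O_M = Σ m_{(i,j),(k,l)} · m_{(i',j'),(k',l')}, summed over quadruples with (i,j) > (i',j') or (k,l) > (k',l'). -/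
open Module

/-- A flag of type `c = (c_0, …, c_{s-1})` in `V`: a decreasing chain
`V = F_0 ⊇ F_1 ⊇ ⋯ ⊇ F_s = 0` with `dim (F_k / F_{k+1}) = c_k` (the parts of a
multi-composition, listed in the lexicographic order of their indices `(i,j)`). -/
def IsFlagOfType {V : Type} [AddCommGroup V] [Module ℂ V] {s : ℕ}
    (c : Fin s → ℕ) (F : Fin (s + 1) → Submodule ℂ V) : Prop :=
  F 0 = ⊤ ∧ F (Fin.last s) = ⊥ ∧ (∀ k l, k ≤ l → F l ≤ F k) ∧
    ∀ k : Fin s, finrank ℂ (F k.castSucc) = finrank ℂ (F k.succ) + c k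

/-- The relative position matrix of a pair of flags. -/
noncomputable def relPos {V : Type} [AddCommGroup V] [Module ℂ V] {s t : ℕ}
    (F : Fin (s + 1) → Submodule ℂ V) (F' : Fin (t + 1) → Submodule ℂ V)
    (k : Fin s) (l : Fin t) : ℕ :=
  finrank ℂ ((F k.succ ⊔ (F k.castSucc ⊓ F' l.castSucc)) : Submodule ℂ V)
    - finrank ℂ ((F k.succ ⊔ (F k.castSucc ⊓ F' l.succ)) : Submodule ℂ V)

/-- The Lie algebra of the stabilizer of a pair of flags: endomorphisms
preserving every step of both flags. -/
def jointStab {V : Type} [AddCommGroup V] [Module ℂ V] {s t : ℕ}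
    (F : Fin (s + 1) → Submodule ℂ V) (F' : Fin (t + 1) → Submodule ℂ V) :
    Submodule ℂ (Module.End ℂ V) where
  carrier := {x | (∀ k, ∀ v ∈ F k, x v ∈ F k) ∧ (∀ l, ∀ v ∈ F' l, x v ∈ F' l)}
  add_mem' := by
    intro x y hx hy
    refine ⟨fun k v hv => ?_, fun l v hv => ?_⟩
    · simpa [LinearMap.add_apply] using (F k).add_mem (hx.1 k v hv) (hy.1 k v hv)
    · simpa [LinearMap.add_apply] using (F' l).add_mem (hx.2 l v hv) (hy.2 l v hv)
  zero_mem' := by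
    refine ⟨fun k v hv => ?_, fun l v hv => ?_⟩
    · simp [LinearMap.zero_apply]
    · simp [LinearMap.zero_apply]
  smul_mem' := by
    intro a x hx
    refine ⟨fun k v hv => ?_, fun l v hv => ?_⟩
    · simpa [LinearMap.smul_apply] using (F k).smul_mem a (hx.1 k v hv)
    · simpa [LinearMap.smul_apply] using (F' l).smul_mem a (hx.2 l v hv)

/-!
In each cell `F k ⊓ F' l` choose a complement `U k l` of the two deeper cells
`F k ⊓ F' (l+1) ⊔ F (k+1) ⊓ F' l`; by the modular law `dim U k l = relPos F F' k l`. By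
descending induction the `U k l` with `k ≥ a`, `l ≥ b` span `F a ⊓ F' b`, and the rows of
`relPos` telescope to `Σ relPos = dim V`, so bases of the `U k l` together form a basis of `V` in
which every step of both flags is a coordinate subspace. An endomorphism preserves both flags
iff its matrix entry from block `(k, l)` to block `(k', l')` vanishes unless `k ≤ k'` and
`l ≤ l'`, so `ν² - dim (jointStab F F')` counts the pairs of basis vectors violating this.
-/

open Submodule

theorem Fin.sum_tsub_of_antitone {n : ℕ} {f : Fin (n + 1) → ℕ} (hf : Antitone f) :
    ∑ i : Fin n, (f i.castSucc - f i.succ) = f 0 - f (Fin.last n) := by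
  induction n with
  | zero => simp
  | succ n ih =>
    have h := ih (hf.comp_monotone Fin.strictMono_castSucc.monotone)
    simp only [Function.comp_apply, ← Fin.succ_castSucc, Fin.castSucc_zero] at h
    rw [Fin.sum_univ_castSucc, h, Fin.succ_last]
    exact tsub_add_tsub_cancel (hf (Fin.zero_le _)) (hf (Fin.le_last _))

theorem Fintype.card_subtype_sigma_prod {P : Type*} [Fintype P] (n : P → ℕ)
    (R : P → P → Prop) [DecidableRel R] :
    Fintype.card {q : (Σ p, Fin (n p)) × (Σ p, Fin (n p)) // R q.1.1 q.2.1} =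
      ∑ Q ∈ Finset.univ.filter (fun Q : P × P => R Q.1 Q.2), n Q.1 * n Q.2 := by
  rw [Fintype.card_subtype, Finset.card_eq_sum_ones, Finset.sum_filter, Finset.sum_filter]
  simp only [Fintype.sum_prod_type, Fintype.sum_sigma]
  simp [Finset.mul_sum, apply_ite Finset.card]

section LinearAlgebra

variable {K V : Type*} [DivisionRing K] [AddCommGroup V] [Module K V]

/-- Dimension form of `(Y ⊔ A) / (Y ⊔ B) ≃ A / (B ⊔ A ⊓ Y)` for `B ≤ A`. -/
theorem Submodule.finrank_sup_add_finrank_sup_inf [FiniteDimensional K V] {A B : Submodule K V}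
    (hBA : B ≤ A) (Y : Submodule K V) :
    finrank K ↥(Y ⊔ A) + finrank K ↥(B ⊔ A ⊓ Y) = finrank K ↥(Y ⊔ B) + finrank K A := by
  have hYA := finrank_sup_add_finrank_inf_eq Y A
  have hYB := finrank_sup_add_finrank_inf_eq Y B
  have hB := finrank_sup_add_finrank_inf_eq B (A ⊓ Y)
  rw [← inf_assoc, inf_eq_left.2 hBA, inf_comm B Y] at hB
  rw [inf_comm Y A] at hYA
  omega

theorem Submodule.exists_sup_eq_finrank_add_eq [FiniteDimensional K V] {X W : Submodule K V}
    (hXW : X ≤ W) : ∃ U ≤ W, X ⊔ U = W ∧ finrank K U + finrank K X = finrank K W := by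
  obtain ⟨U, hdisj, hsup⟩ := IsModularLattice.exists_disjoint_and_sup_eq hXW
  refine ⟨U, hsup ▸ le_sup_right, hsup, ?_⟩
  have := finrank_sup_add_finrank_inf_eq X U
  rw [hsup, hdisj.eq_bot, finrank_bot] at this
  omega

theorem Module.Basis.finrank_span_image {ι : Type*} (B : Basis ι K V) (S : Set ι) [Fintype S] :
    finrank K (span K (B '' S)) = Fintype.card S := by
  rw [Set.image_eq_range]
  exact finrank_span_eq_card (B.linearIndependent.comp _ Subtype.val_injective)

theorem Module.Basis.mapsTo_span_image_iff {ι : Type*} (B : Basis ι K V) (S : Set ι)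
    (f : Module.End K V) :
    (∀ v ∈ span K (B '' S), f v ∈ span K (B '' S)) ↔
      ∀ i j, B.repr (f (B j)) i ≠ 0 → j ∈ S → i ∈ S := by
  constructor
  · intro hf i j hij hj
    exact B.mem_span_image.1 (hf _ (subset_span ⟨j, hj, rfl⟩)) (Finsupp.mem_support_iff.2 hij)
  · intro hf
    suffices span K (B '' S) ≤ (span K (B '' S)).comap f from fun v hv => this hv
    rw [span_le]
    rintro _ ⟨j, hj, rfl⟩
    exact B.mem_span_image.2 fun i hi => hf i j (Finsupp.mem_support_iff.1 hi) hj

end LinearAlgebra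

structure IsFlag {α : Type*} [PartialOrder α] [BoundedOrder α] {s : ℕ}
    (F : Fin (s + 1) → α) : Prop where
  zero_eq_top : F 0 = ⊤
  last_eq_bot : F (Fin.last s) = ⊥
  antitone : Antitone F

theorem IsFlagOfType.isFlag {V : Type} [AddCommGroup V] [Module ℂ V] {s : ℕ} {c : Fin s → ℕ}
    {F : Fin (s + 1) → Submodule ℂ V} (hF : IsFlagOfType c F) : IsFlag F :=
  ⟨hF.1, hF.2.1, fun _ _ h => hF.2.2.1 _ _ h⟩

def lowerCell {V : Type} [AddCommGroup V] [Module ℂ V] {s t : ℕ}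
    (F : Fin (s + 1) → Submodule ℂ V) (F' : Fin (t + 1) → Submodule ℂ V)
    (k : Fin s) (l : Fin t) : Submodule ℂ V :=
  F k.castSucc ⊓ F' l.succ ⊔ F k.succ ⊓ F' l.castSucc

section FlagPair

variable {V : Type} [AddCommGroup V] [Module ℂ V] {s t : ℕ}
  {F : Fin (s + 1) → Submodule ℂ V} {F' : Fin (t + 1) → Submodule ℂ V}

theorem lowerCell_le (hF : Antitone F) (hF' : Antitone F') (k : Fin s) (l : Fin t) :
    lowerCell F F' k l ≤ F k.castSucc ⊓ F' l.castSucc :=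
  sup_le (inf_le_inf_left _ (hF' l.castSucc_le_succ)) (inf_le_inf_right _ (hF k.castSucc_le_succ))

theorem relPos_add_finrank_lowerCell [FiniteDimensional ℂ V] (hF : Antitone F)
    (hF' : Antitone F') (k : Fin s) (l : Fin t) :
    relPos F F' k l + finrank ℂ (lowerCell F F' k l) =
      finrank ℂ ↥(F k.castSucc ⊓ F' l.castSucc) := by
  have hBA : F k.castSucc ⊓ F' l.succ ≤ F k.castSucc ⊓ F' l.castSucc :=
    inf_le_inf_left _ (hF' l.castSucc_le_succ)
  have hAY : F k.castSucc ⊓ F' l.castSucc ⊓ F k.succ = F k.succ ⊓ F' l.castSucc := by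
    rw [inf_right_comm, inf_eq_right.2 (hF k.castSucc_le_succ)]
  have key := finrank_sup_add_finrank_sup_inf hBA (F k.succ)
  rw [hAY] at key
  have hmono := finrank_mono (sup_le_sup_left hBA (F k.succ))
  unfold relPos lowerCell
  omega

theorem sum_relPos [FiniteDimensional ℂ V] (hF : IsFlag F) (hF' : IsFlag F') :
    ∑ k, ∑ l, relPos F F' k l = finrank ℂ V := by
  have hrow (k : Fin s) :
      ∑ l, relPos F F' k l = finrank ℂ (F k.castSucc) - finrank ℂ (F k.succ) := by
    have hanti : Antitone fun l => finrank ℂ ↥(F k.succ ⊔ F k.castSucc ⊓ F' l) :=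
      fun l l' h => finrank_mono (sup_le_sup_left (inf_le_inf_left _ (hF'.antitone h)) _)
    simp only [relPos]
    rw [Fin.sum_tsub_of_antitone hanti, hF'.zero_eq_top, hF'.last_eq_bot, inf_top_eq, inf_bot_eq,
      sup_bot_eq, sup_eq_right.2 (hF.antitone k.castSucc_le_succ)]
  rw [Finset.sum_congr rfl fun k _ => hrow k,
    Fin.sum_tsub_of_antitone fun _ _ h => finrank_mono (hF.antitone h), hF.zero_eq_top,
    hF.last_eq_bot, finrank_top, finrank_bot, Nat.sub_zero]

theorem exists_complements_lowerCell [FiniteDimensional ℂ V] (hF : Antitone F)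
    (hF' : Antitone F') :
    ∃ U : Fin s × Fin t → Submodule ℂ V, ∀ p : Fin s × Fin t,
      U p ≤ F p.1.castSucc ⊓ F' p.2.castSucc ∧
        lowerCell F F' p.1 p.2 ⊔ U p = F p.1.castSucc ⊓ F' p.2.castSucc ∧
        finrank ℂ (U p) = relPos F F' p.1 p.2 := by
  choose U hUle hUsup hUrank using fun p : Fin s × Fin t =>
    exists_sup_eq_finrank_add_eq (lowerCell_le hF hF' p.1 p.2)
  refine ⟨U, fun p => ⟨hUle p, hUsup p, ?_⟩⟩
  have hrel := relPos_add_finrank_lowerCell hF hF' p.1 p.2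
  have hrank := hUrank p
  omega

theorem inf_le_iSup_of_lowerCell_sup_eq (hF : F (Fin.last s) = ⊥) (hF' : F' (Fin.last t) = ⊥)
    {U : Fin s × Fin t → Submodule ℂ V}
    (hU : ∀ p : Fin s × Fin t, lowerCell F F' p.1 p.2 ⊔ U p = F p.1.castSucc ⊓ F' p.2.castSucc)
    (a : Fin (s + 1)) (b : Fin (t + 1)) :
    F a ⊓ F' b ≤ ⨆ (p : Fin s × Fin t) (_ : a ≤ p.1.castSucc ∧ b ≤ p.2.castSucc), U p := by
  induction a using Fin.reverseInduction generalizing b with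
  | last => simp [hF]
  | cast k ihk =>
    induction b using Fin.reverseInduction with
    | last => simp [hF']
    | cast l ihl =>
      rw [← hU (k, l)]
      refine sup_le (sup_le ?_ ?_) (le_iSup₂_of_le (k, l) ⟨le_rfl, le_rfl⟩ le_rfl)
      · exact ihl.trans (biSup_mono fun p hp => ⟨hp.1, l.castSucc_le_succ.trans hp.2⟩)
      · exact (ihk l.castSucc).trans
          (biSup_mono fun p hp => ⟨k.castSucc_le_succ.trans hp.1, hp.2⟩)

theorem exists_basis_adapted_of_isFlag [FiniteDimensional ℂ V] (hF : IsFlag F) (hF' : IsFlag F') :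
    ∃ B : Basis (Σ p : Fin s × Fin t, Fin (relPos F F' p.1 p.2)) ℂ V,
      (∀ a, F a = span ℂ (B '' {i | a ≤ i.1.1.castSucc})) ∧
      (∀ b, F' b = span ℂ (B '' {i | b ≤ i.1.2.castSucc})) := by
  obtain ⟨U, hU⟩ := exists_complements_lowerCell hF.antitone hF'.antitone
  choose hUle hUsup hUrank using hU
  let bU (p : Fin s × Fin t) := finBasisOfFinrankEq ℂ (U p) (hUrank p)
  let v (i : Σ p : Fin s × Fin t, Fin (relPos F F' p.1 p.2)) : V := bU i.1 i.2
  have hU_le_span (p : Fin s × Fin t) (S : Set (Σ p : Fin s × Fin t, Fin (relPos F F' p.1 p.2)))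
      (hS : ∀ j, ⟨p, j⟩ ∈ S) : U p ≤ span ℂ (v '' S) := by
    rw [← (U p).map_subtype_top, ← (bU p).span_eq, map_span, ← Set.range_comp]
    exact span_mono (Set.range_subset_iff.2 fun j => ⟨⟨p, j⟩, hS j, rfl⟩)
  have hinf_le (a : Fin (s + 1)) (b : Fin (t + 1)) :
      F a ⊓ F' b ≤ span ℂ (v '' {i | a ≤ i.1.1.castSucc ∧ b ≤ i.1.2.castSucc}) :=
    (inf_le_iSup_of_lowerCell_sup_eq hF.last_eq_bot hF'.last_eq_bot hUsup a b).trans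
      (iSup₂_le fun p hp => hU_le_span p _ fun _ => hp)
  have htop : ⊤ ≤ span ℂ (Set.range v) := by
    simpa [hF.zero_eq_top, hF'.zero_eq_top, Set.image_univ] using hinf_le 0 0
  have hcard : Fintype.card (Σ p : Fin s × Fin t, Fin (relPos F F' p.1 p.2)) = finrank ℂ V := by
    rw [Fintype.card_sigma, Fintype.sum_prod_type]
    simp [sum_relPos hF hF']
  have hB := coe_basisOfTopLeSpanOfCardEqFinrank v htop hcard
  have hv_mem (i) : v i ∈ F i.1.1.castSucc ⊓ F' i.1.2.castSucc := hUle i.1 (bU i.1 i.2).2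
  refine ⟨basisOfTopLeSpanOfCardEqFinrank v htop hcard, fun a => le_antisymm ?_ ?_,
    fun b => le_antisymm ?_ ?_⟩
  · simpa [hF'.zero_eq_top, hB] using hinf_le a 0
  · rw [span_le, hB]
    rintro _ ⟨i, hi, rfl⟩
    exact hF.antitone hi (hv_mem i).1
  · simpa [hF.zero_eq_top, hB] using hinf_le 0 b
  · rw [span_le, hB]
    rintro _ ⟨i, hi, rfl⟩
    exact hF'.antitone hi (hv_mem i).2

end FlagPair

section Stabilizer

variable {V : Type} [AddCommGroup V] [Module ℂ V] {s t : ℕ}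
  {F : Fin (s + 1) → Submodule ℂ V} {F' : Fin (t + 1) → Submodule ℂ V}
  {ι : Type*} (B : Basis ι ℂ V) {d : ι → Fin (s + 1)} {d' : ι → Fin (t + 1)}

theorem mem_jointStab_iff (hFB : ∀ a, F a = span ℂ (B '' {i | a ≤ d i}))
    (hF'B : ∀ b, F' b = span ℂ (B '' {i | b ≤ d' i})) (x : Module.End ℂ V) :
    x ∈ jointStab F F' ↔ ∀ i j, B.repr (x (B j)) i ≠ 0 → d j ≤ d i ∧ d' j ≤ d' i := by
  change (∀ a, ∀ v ∈ F a, x v ∈ F a) ∧ (∀ b, ∀ v ∈ F' b, x v ∈ F' b) ↔ _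
  simp only [hFB, hF'B, B.mapsTo_span_image_iff]
  constructor
  · rintro ⟨hx, hx'⟩ i j hij
    exact ⟨hx (d j) i j hij (show d j ≤ d j from le_rfl),
      hx' (d' j) i j hij (show d' j ≤ d' j from le_rfl)⟩
  · intro hx
    exact ⟨fun a i j hij ha => ha.trans (hx i j hij).1,
      fun b i j hij hb => hb.trans (hx i j hij).2⟩

variable [Fintype ι] [DecidableEq ι]

theorem jointStab_eq_span (hFB : ∀ a, F a = span ℂ (B '' {i | a ≤ d i}))
    (hF'B : ∀ b, F' b = span ℂ (B '' {i | b ≤ d' i})) :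
    jointStab F F' = span ℂ (B.end '' {q | d q.2 ≤ d q.1 ∧ d' q.2 ≤ d' q.1}) := by
  ext x
  rw [mem_jointStab_iff B hFB hF'B, Basis.mem_span_image]
  simp [Set.subset_def, Matrix.stdBasis, LinearMap.toMatrix_apply]

theorem finrank_jointStab (hFB : ∀ a, F a = span ℂ (B '' {i | a ≤ d i}))
    (hF'B : ∀ b, F' b = span ℂ (B '' {i | b ≤ d' i})) :
    finrank ℂ (jointStab F F') =
      Fintype.card {q : ι × ι // d q.1 ≤ d q.2 ∧ d' q.1 ≤ d' q.2} := by
  rw [jointStab_eq_span B hFB hF'B, B.end.finrank_span_image]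
  exact Fintype.card_congr ((Equiv.prodComm ι ι).subtypeEquiv fun _ => Iff.rfl)

end Stabilizer

theorem orbit_dimension_formula_general
    {V : Type} [AddCommGroup V] [Module ℂ V] [FiniteDimensional ℂ V] (ν : ℕ)
    (hdim : finrank ℂ V = ν)
    {s : ℕ} (c : Fin s → ℕ)
    (F F' : Fin (s + 1) → Submodule ℂ V)
    (hF : IsFlagOfType c F) (hF' : IsFlagOfType c F') :
    ν ^ 2 - finrank ℂ (jointStab F F')
      = ∑ q ∈ Finset.univ.filter
          (fun q : (Fin s × Fin s) × (Fin s × Fin s) =>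
            q.2.1 < q.1.1 ∨ q.2.2 < q.1.2),
          relPos F F' q.1.1 q.1.2 * relPos F F' q.2.1 q.2.2 := by
  obtain ⟨B, hFB, hF'B⟩ := exists_basis_adapted_of_isFlag hF.isFlag hF'.isFlag
  rw [finrank_jointStab B hFB hF'B, ← hdim, finrank_eq_card_basis B, sq, ← Fintype.card_prod,
    ← Fintype.card_subtype_compl]
  have hcount := Fintype.card_subtype_sigma_prod (fun p : Fin s × Fin s => relPos F F' p.1 p.2)
    fun p p' => p'.1 < p.1 ∨ p'.2 < p.2
  beta_reduce at hcount
  rw [← hcount]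
  exact Fintype.card_congr (Equiv.subtypeEquivRight fun q => by
    simp only [not_and_or, not_le, Fin.castSucc_lt_castSucc_iff])

/-- For a pair of flags of the same (multi-composition) type in a
`ν`-dimensional space with relative position matrix `M ∈ Θ`, the `GL(V)`-orbit
`O_M` through the pair — whose dimension is `ν²` minus the dimension of the
stabilizer — satisfies
`dim O_M = Σ m_{(i,j),(k,l)} m_{(i',j'),(k',l')}`, summed over quadruples with
`(i,j) > (i',j')` or `(k,l) > (k',l')` (lexicographically, i.e. in the
flattened indexing, over pairs `((k,l),(k',l'))` with `k' < k` or `l' < l`). -/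
theorem orbit_dimension_formula
    {V : Type} [AddCommGroup V] [Module ℂ V] [FiniteDimensional ℂ V] (ν : ℕ)
    (hdim : finrank ℂ V = ν)
    {s : ℕ} (c : Fin s → ℕ) (hc : ∑ k, c k = ν)
    (F F' : Fin (s + 1) → Submodule ℂ V)
    (hF : IsFlagOfType c F) (hF' : IsFlagOfType c F') :
    ν ^ 2 - finrank ℂ (jointStab F F')
      = ∑ q ∈ Finset.univ.filter
          (fun q : (Fin s × Fin s) × (Fin s × Fin s) =>
            q.2.1 < q.1.1 ∨ q.2.2 < q.1.2),
          relPos F F' q.1.1 q.1.2 * relPos F F' q.2.1 q.2.2 :=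
  orbit_dimension_formula_general ν hdim c F F' hF hF'
end

section
/- In the stratification of Y = 𝔽̃ ×_{E} 𝔽̃ by strata Y_M for M ∈ Θ, one has dim Y_M = ν² − Σ_{i,j} ν_{i,j}² + Σ_{i, k≤r} n_{i,k} d_r, where n_{i,k} = dim((V_{i+1} + V_i ∩ V'_k)/(V_{i+1} + V_i ∩ V'_{k+1})) for any (V̲,V̲') ∈ O_M; moreover Σ_{i, k≤r} n_{i,k} d_r ≤ Σ_{i≤r} ν_i d_r, with consequence dim Y_M ≤ ν² − Σ_{i,j} ν_{i,j}² + Σ_{i≤r} ν_i d_r. -/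
/-- Index set of parts `ν_{i,j}` of a multi-composition. -/
abbrev MCIdx (m : ℕ) (a : Fin m → ℕ) := Σ i : Fin m, Fin (a i)

/-- The lexicographic order `(i,j) < (i',j')` on parts of a multi-composition. -/
def mcLex {m : ℕ} {a : Fin m → ℕ} (p q : MCIdx m a) : Prop :=
  p.1 < q.1 ∨ (p.1 = q.1 ∧ (p.2 : ℕ) < (q.2 : ℕ))

instance {m : ℕ} {a : Fin m → ℕ} (p q : MCIdx m a) : Decidable (mcLex p q) := by
  unfold mcLex; infer_instance

section mcLexFacts
variable {m : ℕ} {a : Fin m → ℕ}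

lemma mcLex_irrefl (p : MCIdx m a) : ¬ mcLex p p := by
  obtain ⟨i, j⟩ := p
  rintro (h | ⟨e, h⟩)
  · exact lt_irrefl _ h
  · exact lt_irrefl _ h

lemma mcLex_asymm {p q : MCIdx m a} (h : mcLex p q) (h' : mcLex q p) : False := by
  obtain ⟨i, j⟩ := p; obtain ⟨k, l⟩ := q
  simp only [mcLex] at h h'
  rcases h with h | ⟨e, h2⟩ <;> rcases h' with h' | ⟨e', h2'⟩
  · exact lt_asymm h h'
  · exact absurd h (by simp [e'])
  · exact absurd h' (by simp [e])
  · exact lt_asymm h2 h2'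

lemma mcLex_trichotomy (p q : MCIdx m a) : mcLex p q ∨ p = q ∨ mcLex q p := by
  obtain ⟨i, j⟩ := p; obtain ⟨k, l⟩ := q
  rcases lt_trichotomy i k with h | h | h
  · exact Or.inl (Or.inl h)
  · subst h
    rcases lt_trichotomy (j : ℕ) (l : ℕ) with h | h | h
    · exact Or.inl (Or.inr ⟨rfl, h⟩)
    · exact Or.inr (Or.inl (by simp [Fin.ext h]))
    · exact Or.inr (Or.inr (Or.inr ⟨rfl, h⟩))
  · exact Or.inr (Or.inr (Or.inl h))

end mcLexFacts

section S4
variable {ι : Type*} [Fintype ι] [DecidableEq ι]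

def S4 (M : ι → ι → ℕ) (c : (ι × ι) × (ι × ι) → Prop) [DecidablePred c] : ℕ :=
  ∑ x : (ι × ι) × (ι × ι), if c x then M x.1.1 x.1.2 * M x.2.1 x.2.2 else 0

variable (M : ι → ι → ℕ) (c d : (ι × ι) × (ι × ι) → Prop) [DecidablePred c] [DecidablePred d]

omit [DecidableEq ι] in
lemma S4_congr (h : ∀ x, c x ↔ d x) : S4 M c = S4 M d :=
  Finset.sum_congr rfl fun x _ => by simp [h x]

omit [DecidableEq ι] in
lemma S4_or (h : ∀ x, ¬ (c x ∧ d x)) :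
    S4 M (fun x => c x ∨ d x) = S4 M c + S4 M d := by
  unfold S4
  rw [← Finset.sum_add_distrib]
  refine Finset.sum_congr rfl fun x _ => ?_
  by_cases hc : c x <;> by_cases hd : d x <;> simp [hc, hd]
  exact absurd ⟨hc, hd⟩ (h x)

omit [DecidableEq ι] in
lemma S4_add_not :
    S4 M c + S4 M (fun x => ¬ c x)
      = ∑ x : (ι × ι) × (ι × ι), M x.1.1 x.1.2 * M x.2.1 x.2.2 := by
  unfold S4
  rw [← Finset.sum_add_distrib]
  refine Finset.sum_congr rfl fun x _ => ?_
  by_cases hc : c x <;> simp [hc]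

omit [DecidableEq ι] in
lemma S4_total :
    (∑ x : (ι × ι) × (ι × ι), M x.1.1 x.1.2 * M x.2.1 x.2.2)
      = (∑ p : ι × ι, M p.1 p.2) ^ 2 := by
  rw [sq, Finset.sum_mul_sum, Fintype.sum_prod_type]

omit [DecidableEq ι] in
lemma S4_swap : S4 M c = S4 M (fun x => c (x.2, x.1)) := by
  unfold S4
  apply Fintype.sum_bijective Prod.swap Prod.swap_bijective
  rintro ⟨p, q⟩
  simp [mul_comm]

lemma S4_diag_row :
    S4 M (fun x => x.1.1 = x.2.1) = ∑ i : ι, (∑ j, M i j) ^ 2 := by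
  unfold S4
  simp only [Fintype.sum_prod_type]
  have h1 : ∀ p1 p2 q1 : ι,
      (∑ q2, if p1 = q1 then M p1 p2 * M q1 q2 else 0)
        = if p1 = q1 then M p1 p2 * ∑ q2, M q1 q2 else 0 := by
    intro p1 p2 q1; split <;> simp [Finset.mul_sum]
  simp only [h1]
  have h2 : ∀ p1 p2 : ι,
      (∑ q1, if p1 = q1 then M p1 p2 * ∑ q2, M q1 q2 else 0)
        = M p1 p2 * ∑ q2, M p1 q2 := by
    intro p1 p2; rw [Finset.sum_ite_eq]; simp
  simp only [h2, ← Finset.sum_mul]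
  exact Finset.sum_congr rfl fun i _ => (sq _).symm

lemma S4_diag_col :
    S4 M (fun x => x.1.2 = x.2.2) = ∑ j : ι, (∑ i, M i j) ^ 2 := by
  have h := S4_diag_row (fun i j : ι => M j i)
  rw [← h]
  unfold S4
  apply Fintype.sum_equiv ((Equiv.prodComm ι ι).prodCongr (Equiv.prodComm ι ι))
  rintro ⟨⟨p1, p2⟩, ⟨q1, q2⟩⟩
  rfl

end S4

/-- In the stratification of `Y = 𝔽̃ ×_E 𝔽̃` by the strata `Y_M`,
`M ∈ Θ`, one has (using that `Y_M → Z_M` and `Z_M → O_M` are vector bundles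
with the stated fiber dimensions, and the orbit dimension formula for `O_M`):
`dim Y_M = ν² − Σ_{i,j} ν_{i,j}² + Σ_{i,k ≤ r} n_{i,k} d_r`, where
`n_{i,k} = Σ_{j,l} m_{(i,j),(k,l)}`; moreover
`Σ_{i,k ≤ r} n_{i,k} d_r ≤ Σ_{i ≤ r} ν_i d_r`, whence
`dim Y_M ≤ ν² − Σ_{i,j} ν_{i,j}² + Σ_{i ≤ r} ν_i d_r ( = dim 𝔽̃)`. -/
theorem stratum_dimension_bound
    (m : ℕ) (a : Fin m → ℕ) (νp : ∀ i : Fin m, Fin (a i) → ℕ) (d : Fin m → ℕ)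
    (M : MCIdx m a → MCIdx m a → ℕ)
    (hrow : ∀ p, ∑ q, M p q = νp p.1 p.2)
    (hcol : ∀ q, ∑ p, M p q = νp q.1 q.2)
    -- the block sums `n i k = Σ_{j,l} m_{(i,j),(k,l)}`
    (n : Fin m → Fin m → ℕ)
    (hn : ∀ i k, n i k = ∑ j, ∑ l, M ⟨i, j⟩ ⟨k, l⟩)
    -- total dimension `ν` and block dimensions `ν_i`
    (ν : ℕ) (hν : ν = ∑ p : MCIdx m a, νp p.1 p.2)
    (νblk : Fin m → ℕ) (hνblk : ∀ i, νblk i = ∑ j, νp i j)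
    -- the dimensions of the orbit `O_M`, of `Z_M`, and of `Y_M`:
    (dimOM dimZM dimYM : ℕ)
    (hOM : dimOM = ∑ q ∈ Finset.univ.filter
        (fun q : (MCIdx m a × MCIdx m a) × (MCIdx m a × MCIdx m a) =>
          mcLex q.2.1 q.1.1 ∨ mcLex q.2.2 q.1.2),
        M q.1.1 q.1.2 * M q.2.1 q.2.2)
    (hZM : dimZM = dimOM + ∑ q ∈ Finset.univ.filter
        (fun q : (MCIdx m a × MCIdx m a) × (MCIdx m a × MCIdx m a) =>
          mcLex q.1.1 q.2.1 ∧ mcLex q.1.2 q.2.2),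
        M q.1.1 q.1.2 * M q.2.1 q.2.2)
    (hYM : dimYM = dimZM + ∑ r, d r *
        ∑ p ∈ Finset.univ.filter (fun p : Fin m × Fin m => p.1 ≤ r ∧ p.2 ≤ r),
          n p.1 p.2) :
    dimYM = ν ^ 2 - (∑ p : MCIdx m a, (νp p.1 p.2) ^ 2)
        + ∑ r, d r *
          ∑ p ∈ Finset.univ.filter (fun p : Fin m × Fin m => p.1 ≤ r ∧ p.2 ≤ r),
            n p.1 p.2 ∧
    (∑ r, d r *
        ∑ p ∈ Finset.univ.filter (fun p : Fin m × Fin m => p.1 ≤ r ∧ p.2 ≤ r),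
          n p.1 p.2
      ≤ ∑ r, d r * ∑ i ∈ Finset.univ.filter (fun i : Fin m => i ≤ r), νblk i) ∧
    dimYM ≤ ν ^ 2 - (∑ p : MCIdx m a, (νp p.1 p.2) ^ 2)
        + ∑ r, d r * ∑ i ∈ Finset.univ.filter (fun i : Fin m => i ≤ r), νblk i := by
  
  classical
  set Sq : ℕ := ∑ p : MCIdx m a, (νp p.1 p.2) ^ 2 with hSq
  -- Step 0: translate the filter sums to S4
  have hA : dimOM = S4 M (fun x => mcLex x.2.1 x.1.1 ∨ mcLex x.2.2 x.1.2) := by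
    rw [hOM, Finset.sum_filter]; rfl
  have hB : dimZM = dimOM + S4 M (fun x => mcLex x.1.1 x.2.1 ∧ mcLex x.1.2 x.2.2) := by
    rw [hZM, Finset.sum_filter]; rfl
  -- row and column diagonal sums
  have hrowS : S4 M (fun x => x.1.1 = x.2.1) = Sq := by
    rw [S4_diag_row]
    exact Finset.sum_congr rfl fun i _ => by rw [hrow]
  have hcolS : S4 M (fun x => x.1.2 = x.2.2) = Sq := by
    rw [S4_diag_col]
    exact Finset.sum_congr rfl fun j _ => by rw [hcol]
  -- total sum
  have htot : (∑ x : (MCIdx m a × MCIdx m a) × (MCIdx m a × MCIdx m a), M x.1.1 x.1.2 * M x.2.1 x.2.2) = ν ^ 2 := by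
    rw [S4_total]
    congr 1
    rw [hν, Fintype.sum_prod_type]
    exact Finset.sum_congr rfl fun p _ => hrow p
  -- t1 : A + ¬A = total
  have t1 : S4 M (fun x => mcLex x.2.1 x.1.1 ∨ mcLex x.2.2 x.1.2)
      + S4 M (fun x => ¬ (mcLex x.2.1 x.1.1 ∨ mcLex x.2.2 x.1.2)) = ν ^ 2 := by
    rw [S4_add_not, htot]
  -- t2 : ¬A = B + C
  have t2 : S4 M (fun x => ¬ (mcLex x.2.1 x.1.1 ∨ mcLex x.2.2 x.1.2))
      = S4 M (fun x => mcLex x.1.1 x.2.1 ∧ mcLex x.1.2 x.2.2)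
        + S4 M (fun x => ¬ (mcLex x.2.1 x.1.1 ∨ mcLex x.2.2 x.1.2)
            ∧ ¬ (mcLex x.1.1 x.2.1 ∧ mcLex x.1.2 x.2.2)) := by
    rw [← S4_or]
    · apply S4_congr
      intro x
      have hBA : (mcLex x.1.1 x.2.1 ∧ mcLex x.1.2 x.2.2)
          → ¬ (mcLex x.2.1 x.1.1 ∨ mcLex x.2.2 x.1.2) :=
        fun hb h => h.elim (mcLex_asymm hb.1) (mcLex_asymm hb.2)
      tauto
    · intro x; tauto
  -- t3 : C = D1 + D2
  have t3 : S4 M (fun x => ¬ (mcLex x.2.1 x.1.1 ∨ mcLex x.2.2 x.1.2)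
        ∧ ¬ (mcLex x.1.1 x.2.1 ∧ mcLex x.1.2 x.2.2))
      = S4 M (fun x => x.1.1 = x.2.1 ∧ ¬ mcLex x.2.2 x.1.2)
        + S4 M (fun x => mcLex x.1.1 x.2.1 ∧ x.1.2 = x.2.2) := by
    rw [← S4_or]
    · apply S4_congr
      intro x
      constructor
      · rintro ⟨hA, hB⟩
        have hn1 : ¬ mcLex x.2.1 x.1.1 := fun h => hA (Or.inl h)
        have hn2 : ¬ mcLex x.2.2 x.1.2 := fun h => hA (Or.inr h)
        rcases mcLex_trichotomy x.1.1 x.2.1 with h1 | h1 | h1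
        · right
          refine ⟨h1, ?_⟩
          rcases mcLex_trichotomy x.1.2 x.2.2 with h2 | h2 | h2
          · exact absurd ⟨h1, h2⟩ hB
          · exact h2
          · exact absurd h2 hn2
        · exact Or.inl ⟨h1, hn2⟩
        · exact absurd h1 hn1
      · rintro (⟨e1, h2⟩ | ⟨h1, e2⟩)
        · refine ⟨?_, ?_⟩
          · rintro (h | h)
            · exact mcLex_irrefl _ (by rwa [e1] at h)
            · exact h2 h
          · rintro ⟨h, -⟩
            exact mcLex_irrefl _ (by rwa [e1] at h)
        · refine ⟨?_, ?_⟩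
          · rintro (h | h)
            · exact mcLex_asymm h1 h
            · exact mcLex_irrefl _ (by rwa [e2] at h)
          · rintro ⟨-, h⟩
            exact mcLex_irrefl _ (by rwa [e2] at h)
    · intro x
      rintro ⟨⟨e1, -⟩, h1, -⟩
      exact mcLex_irrefl _ (by rwa [e1] at h1)
  -- t4 : (p1 = q1) = D1 + E
  have t4 : S4 M (fun x : (MCIdx m a × MCIdx m a) × (MCIdx m a × MCIdx m a) => x.1.1 = x.2.1)
      = S4 M (fun x => x.1.1 = x.2.1 ∧ ¬ mcLex x.2.2 x.1.2)
        + S4 M (fun x => x.1.1 = x.2.1 ∧ mcLex x.2.2 x.1.2) := by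
    rw [← S4_or]
    · apply S4_congr
      intro x
      constructor
      · intro e
        by_cases h : mcLex x.2.2 x.1.2
        · exact Or.inr ⟨e, h⟩
        · exact Or.inl ⟨e, h⟩
      · rintro (⟨e, -⟩ | ⟨e, -⟩) <;> exact e
    · intro x
      rintro ⟨⟨-, h1⟩, -, h2⟩
      exact h1 h2
  -- t5 : (p1 = q1) = diag + (E' + E)
  have t5 : S4 M (fun x : (MCIdx m a × MCIdx m a) × (MCIdx m a × MCIdx m a) => x.1.1 = x.2.1)
      = S4 M (fun x => x.1.1 = x.2.1 ∧ x.1.2 = x.2.2)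
        + (S4 M (fun x => x.1.1 = x.2.1 ∧ mcLex x.1.2 x.2.2)
          + S4 M (fun x => x.1.1 = x.2.1 ∧ mcLex x.2.2 x.1.2)) := by
    rw [← S4_or, ← S4_or]
    · apply S4_congr
      intro x
      have tr2 := mcLex_trichotomy x.1.2 x.2.2
      tauto
    · intro x
      rintro ⟨⟨-, e2⟩, (⟨-, h⟩ | ⟨-, h⟩)⟩
      · exact mcLex_irrefl _ (by rwa [e2] at h)
      · exact mcLex_irrefl _ (by rwa [← e2] at h)
    · intro x
      rintro ⟨⟨-, h1⟩, -, h2⟩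
      exact mcLex_asymm h1 h2
  -- t6 : E = E' by swapping
  have t6 : S4 M (fun x => x.1.1 = x.2.1 ∧ mcLex x.2.2 x.1.2)
      = S4 M (fun x => x.1.1 = x.2.1 ∧ mcLex x.1.2 x.2.2) := by
    rw [S4_swap M (fun x => x.1.1 = x.2.1 ∧ mcLex x.2.2 x.1.2)]
    apply S4_congr
    intro x
    constructor
    · rintro ⟨e, h⟩; exact ⟨e.symm, h⟩
    · rintro ⟨e, h⟩; exact ⟨e.symm, h⟩
  -- t7 : (p2 = q2) = diag + (D2 + G)
  have t7 : S4 M (fun x : (MCIdx m a × MCIdx m a) × (MCIdx m a × MCIdx m a) => x.1.2 = x.2.2)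
      = S4 M (fun x => x.1.1 = x.2.1 ∧ x.1.2 = x.2.2)
        + (S4 M (fun x => mcLex x.1.1 x.2.1 ∧ x.1.2 = x.2.2)
          + S4 M (fun x => mcLex x.2.1 x.1.1 ∧ x.1.2 = x.2.2)) := by
    rw [← S4_or, ← S4_or]
    · apply S4_congr
      intro x
      have tr1 := mcLex_trichotomy x.1.1 x.2.1
      tauto
    · intro x
      rintro ⟨⟨e1, -⟩, (⟨h, -⟩ | ⟨h, -⟩)⟩
      · exact mcLex_irrefl _ (by rwa [e1] at h)
      · exact mcLex_irrefl _ (by rwa [← e1] at h)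
    · intro x
      rintro ⟨⟨h1, -⟩, h2, -⟩
      exact mcLex_asymm h1 h2
  -- t8 : G = D2 by swapping
  have t8 : S4 M (fun x => mcLex x.2.1 x.1.1 ∧ x.1.2 = x.2.2)
      = S4 M (fun x => mcLex x.1.1 x.2.1 ∧ x.1.2 = x.2.2) := by
    rw [S4_swap M (fun x => mcLex x.2.1 x.1.1 ∧ x.1.2 = x.2.2)]
    apply S4_congr
    intro x
    constructor
    · rintro ⟨h, e⟩; exact ⟨h, e.symm⟩
    · rintro ⟨h, e⟩; exact ⟨h, e.symm⟩
  -- combine: D2 = E'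
  have hD2E : S4 M (fun x => mcLex x.1.1 x.2.1 ∧ x.1.2 = x.2.2)
      = S4 M (fun x => x.1.1 = x.2.1 ∧ mcLex x.1.2 x.2.2) := by
    omega
  -- C = Sq
  have hC : S4 M (fun x => ¬ (mcLex x.2.1 x.1.1 ∨ mcLex x.2.2 x.1.2)
      ∧ ¬ (mcLex x.1.1 x.2.1 ∧ mcLex x.1.2 x.2.2)) = Sq := by
    omega
  -- key identity
  have key : dimZM + Sq = ν ^ 2 := by omega
  -- Part 2: the inequality, summand by summand
  have hnk : ∀ i : Fin m, ∑ k, n i k = νblk i := by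
    intro i
    rw [hνblk]
    calc ∑ k, n i k = ∑ k, ∑ j, ∑ l, M ⟨i, j⟩ ⟨k, l⟩ := by
          exact Finset.sum_congr rfl fun k _ => hn i k
      _ = ∑ j, ∑ k, ∑ l, M ⟨i, j⟩ ⟨k, l⟩ := Finset.sum_comm
      _ = ∑ j, νp i j := by
          refine Finset.sum_congr rfl fun j _ => ?_
          rw [← hrow ⟨i, j⟩, ← Finset.univ_sigma_univ, Finset.sum_sigma]
  have hineq : ∀ r : Fin m,
      (∑ p ∈ Finset.univ.filter (fun p : Fin m × Fin m => p.1 ≤ r ∧ p.2 ≤ r), n p.1 p.2)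
        ≤ ∑ i ∈ Finset.univ.filter (fun i : Fin m => i ≤ r), νblk i := by
    intro r
    rw [Finset.sum_filter, Finset.sum_filter, Fintype.sum_prod_type]
    refine Finset.sum_le_sum fun i _ => ?_
    by_cases hi : i ≤ r
    · simp only [hi, true_and, if_true]
      calc (∑ k, if k ≤ r then n i k else 0) ≤ ∑ k, n i k :=
            Finset.sum_le_sum fun k _ => by split <;> simp
        _ = νblk i := hnk i
    · simp [hi]
  have G2 : (∑ r, d r *
        ∑ p ∈ Finset.univ.filter (fun p : Fin m × Fin m => p.1 ≤ r ∧ p.2 ≤ r), n p.1 p.2)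
      ≤ ∑ r, d r * ∑ i ∈ Finset.univ.filter (fun i : Fin m => i ≤ r), νblk i :=
    Finset.sum_le_sum fun r _ => Nat.mul_le_mul_left (d r) (hineq r)
  have G1 : dimYM = ν ^ 2 - Sq
      + ∑ r, d r *
        ∑ p ∈ Finset.univ.filter (fun p : Fin m × Fin m => p.1 ≤ r ∧ p.2 ≤ r), n p.1 p.2 := by
    omega
  exact ⟨G1, G2, by rw [G1]; exact Nat.add_le_add_left G2 _⟩
end

section
/- Let x_σ ∈ End(V) be a nilpotent endomorphism of Jordan type μ^⊥ (the dual of μ) and suppose λ is a partition refinement data with dual partition contribution making (x_σ, V̲) a stable pair for a flag V̲ of type λ. If the flag V̲ of type λ stabilized by x_σ (in the sense x_σ(V_j) ⊆ V_{j+1}) is unique, then for the middle subspace V_2 of V̲, the restriction x_σ|_{V_2} has Jordan type λ_2^⊥. -/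
/-!
Restricting a stable flag of type `(λ₁, λ₂)` to its step `V₂` gives a stable flag of type `λ₂`
for `x|_{V₂}`, and uniqueness passes to it, since a second such flag on `V₂` could be glued
below the first `|λ₁|` steps of the original one. So it suffices to show: if `y` has a unique
stable flag `G` of type `d₀ ≥ d₁ ≥ ⋯`, then `dim ker y^k = d₀ + ⋯ + d_{k-1}`.

The inequality `≥` holds for every stable flag, because `range y^k ⊆ G_k`. For `≤`, induction
gives the kernel dimensions of `y|_{G₁}`, and `range y ⊆ G₁` gives
`dim ker y^{k+1} ≤ dim ker y + dim ker (y|_{G₁})^k`; it remains to see `dim ker y = d₀`.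
Any subspace of dimension `dim G₁` between `G₂ + y V` and `y⁻¹ G₂` may replace `G₁` in the flag,
so uniqueness forces `G₁` to be one of these two endpoints. If `G₁ = G₂ + y V`, then
`G₁ = y V` because `G₂ = y G₁`; if `G₁ = y⁻¹ G₂`, then `ker y ⊆ G₁` has dimension `d₁ ≤ d₀`.
-/

open Module

/-- A flag of type `(λ₁, λ₂)` (the concatenation of the part lists `l₁`, `l₂`),
together with the stability condition `x (V_j) ⊆ V_{j+1}`; encoded as a
decreasing chain `F 0 = V ⊇ F 1 ⊇ ⋯ ⊇ F r = 0` (`r` the total number of parts)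
with `dim (F j / F (j+1))` the `j`-th part. -/
def IsStableFlagOfType {V : Type} [AddCommGroup V] [Module ℂ V]
    (x : Module.End ℂ V) (parts : List ℕ) (F : ℕ → Submodule ℂ V) : Prop :=
  F 0 = ⊤ ∧ (∀ j, F (j + 1) ≤ F j) ∧ (∀ j, parts.length ≤ j → F j = ⊥) ∧
    (∀ j < parts.length,
      finrank ℂ (F j) = finrank ℂ (F (j + 1)) + parts.getD j 0) ∧
    ∀ j, Submodule.map x (F j) ≤ F (j + 1)

open Submodule LinearMap

section FiniteDimensional

variable {K V : Type*} [DivisionRing K] [AddCommGroup V] [Module K V] [FiniteDimensional K V]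

theorem Submodule.exists_le_le_finrank_eq {A B : Submodule K V} (hAB : A ≤ B) {n : ℕ}
    (hAn : finrank K A ≤ n) (hnB : n ≤ finrank K B) :
    ∃ C, A ≤ C ∧ C ≤ B ∧ finrank K C = n := by
  induction n, hAn using Nat.le_induction with
  | base => exact ⟨A, le_rfl, hAB, rfl⟩
  | succ n _ ih =>
    obtain ⟨C, hAC, hCB, hC⟩ := ih (by omega)
    obtain ⟨v, hvB, hvC⟩ := SetLike.exists_of_lt (lt_of_le_of_ne hCB (by rintro rfl; omega))
    exact ⟨C ⊔ K ∙ v, le_sup_of_le_left hAC, sup_le hCB ((span_singleton_le_iff_mem v B).mpr hvB),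
      by rw [finrank_sup_span_singleton hvC, hC]⟩

theorem Submodule.eq_or_eq_of_forall_finrank_eq {A B C : Submodule K V} (hAC : A ≤ C)
    (hCB : C ≤ B) (huniq : ∀ C', A ≤ C' → C' ≤ B → finrank K C' = finrank K C → C' = C) :
    C = A ∨ C = B := by
  by_contra! h
  obtain ⟨v, hvB, hvC⟩ := SetLike.exists_of_lt (lt_of_le_of_ne hCB h.2)
  have hAC' : finrank K A < finrank K C := finrank_lt_finrank_of_lt (lt_of_le_of_ne hAC h.1.symm)
  have hvA : finrank K ↥(A ⊔ K ∙ v) = finrank K A + 1 :=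
    finrank_sup_span_singleton fun hv => hvC (hAC hv)
  obtain ⟨C', hvC', hC'B, hC'⟩ := exists_le_le_finrank_eq
    (sup_le (hAC.trans hCB) ((span_singleton_le_iff_mem v B).mpr hvB)) (by omega)
    (finrank_mono hCB)
  rw [huniq C' (le_sup_left.trans hvC') hC'B hC'] at hvC'
  exact hvC (hvC' (mem_sup_right (mem_span_singleton_self v)))

variable {W U : Type*} [AddCommGroup W] [Module K W] [FiniteDimensional K W] [AddCommGroup U]
  [Module K U]

theorem LinearMap.finrank_ker_comp_le (f : V →ₗ[K] W) (g : W →ₗ[K] U) :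
    finrank K (ker (g ∘ₗ f)) ≤ finrank K (ker f) + finrank K (ker g) := by
  let φ := f.restrict (p := ker (g ∘ₗ f)) (q := ker g) fun _ hv => hv
  have hφ := φ.finrank_range_add_finrank_ker
  have hker : finrank K (ker φ) ≤ finrank K (ker f) := by
    rw [show ker φ = (ker f).comap (ker (g ∘ₗ f)).subtype from ker_restrict _,
      ← finrank_map_subtype_eq, map_comap_subtype]
    exact finrank_mono inf_le_right
  have := (range φ).finrank_le
  omega

theorem Module.End.finrank_ker_pow_succ_le {f : Module.End K V} {p : Submodule K V}
    (hp : range f ≤ p) (k : ℕ) :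
    finrank K (ker (f ^ (k + 1))) ≤
      finrank K (ker f) +
        finrank K (ker (f.restrict (fun v (_ : v ∈ p) => hp (mem_range_self f v)) ^ k)) := by
  have hfp : ∀ v, f v ∈ p := fun v => hp (mem_range_self f v)
  have hcomp : f ^ (k + 1) =
      p.subtype ∘ₗ (f.restrict (fun v _ => hfp v) ^ k) ∘ₗ f.codRestrict p hfp := by
    ext v
    rw [Module.End.pow_restrict, pow_succ]
    rfl
  rw [hcomp, ker_comp, ker_subtype, comap_bot, ← ker_codRestrict p f hfp]
  exact finrank_ker_comp_le _ _

end FiniteDimensional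

namespace IsStableFlagOfType

variable {V : Type} [AddCommGroup V] [Module ℂ V] {x : Module.End ℂ V} {F : ℕ → Submodule ℂ V}

theorem range_pow_le {parts : List ℕ} (hF : IsStableFlagOfType x parts F) (k : ℕ) :
    range (x ^ k) ≤ F k := by
  obtain ⟨h0, -, -, -, hmap⟩ := hF
  induction k with
  | zero => simp [h0]
  | succ k ih =>
    rw [pow_succ', Module.End.mul_eq_comp, range_comp]
    exact (map_mono ih).trans (hmap k)

variable [FiniteDimensional ℂ V]

theorem iff_finrank_eq_sum_drop {parts : List ℕ} :
    IsStableFlagOfType x parts F ↔ F 0 = ⊤ ∧ (∀ j, F (j + 1) ≤ F j) ∧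
      (∀ j, finrank ℂ (F j) = (parts.drop j).sum) ∧ ∀ j, map x (F j) ≤ F (j + 1) := by
  constructor
  · rintro ⟨h0, hle, hbot, hdim, hmap⟩
    refine ⟨h0, hle, fun j => ?_, hmap⟩
    induction hj : parts.length - j generalizing j with
    | zero => simp [hbot j (by omega), List.drop_eq_nil_of_le (by omega : parts.length ≤ j)]
    | succ t ih =>
      have hj : j < parts.length := by omega
      rw [hdim j hj, ih (j + 1) (by omega), List.drop_eq_getElem_cons hj,
        List.getD_eq_getElem, List.sum_cons, add_comm]
  · rintro ⟨h0, hle, hdim, hmap⟩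
    refine ⟨h0, hle, fun j hj => ?_, fun j hj => ?_, hmap⟩
    · rw [← finrank_eq_zero, hdim, List.drop_eq_nil_of_le hj, List.sum_nil]
    · rw [hdim, hdim, List.drop_eq_getElem_cons hj, List.getD_eq_getElem, List.sum_cons, add_comm]

theorem finrank_eq_sum {parts : List ℕ} (hF : IsStableFlagOfType x parts F) :
    finrank ℂ V = parts.sum := by
  obtain ⟨h0, -, hdim, -⟩ := iff_finrank_eq_sum_drop.mp hF
  rw [← finrank_top, ← h0, hdim 0, List.drop_zero]

theorem sum_take_le_finrank_ker_pow {parts : List ℕ} (hF : IsStableFlagOfType x parts F)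
    (k : ℕ) : (parts.take k).sum ≤ finrank ℂ (ker (x ^ k)) := by
  have hrange : finrank ℂ (range (x ^ k)) ≤ (parts.drop k).sum :=
    (iff_finrank_eq_sum_drop.mp hF).2.2.1 k ▸ finrank_mono (hF.range_pow_le k)
  have := (x ^ k).finrank_range_add_finrank_ker
  have := parts.sum_take_add_sum_drop k
  have := hF.finrank_eq_sum
  omega

section Restrict

variable {l₁ l₂ : List ℕ}

theorem restrict (hF : IsStableFlagOfType x (l₁ ++ l₂) F)
    (hinv : ∀ v ∈ F l₁.length, x v ∈ F l₁.length) :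
    IsStableFlagOfType (x.restrict hinv) l₂
      fun i => comap (F l₁.length).subtype (F (l₁.length + i)) := by
  obtain ⟨-, hle, hdim, hmap⟩ := iff_finrank_eq_sum_drop.mp hF
  refine iff_finrank_eq_sum_drop.mpr ⟨comap_subtype_self _, fun i => comap_mono (hle _),
    fun i => ?_, fun i => ?_⟩
  · have hsub : F (l₁.length + i) ≤ F l₁.length :=
      antitone_nat_of_succ_le hle (l₁.length.le_add_right i)
    rw [(comapSubtypeEquivOfLe hsub).finrank_eq, hdim, List.drop_length_add_append]
  · rintro _ ⟨w, hw, rfl⟩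
    exact hmap _ ⟨w, hw, rfl⟩

theorem extend (hF : IsStableFlagOfType x (l₁ ++ l₂) F)
    (hinv : ∀ v ∈ F l₁.length, x v ∈ F l₁.length) {G : ℕ → Submodule ℂ (F l₁.length)}
    (hG : IsStableFlagOfType (x.restrict hinv) l₂ G) :
    IsStableFlagOfType x (l₁ ++ l₂) fun j =>
      if j < l₁.length then F j else map (F l₁.length).subtype (G (j - l₁.length)) := by
  obtain ⟨h0, hle, hdim, hmap⟩ := iff_finrank_eq_sum_drop.mp hF
  obtain ⟨hG0, hGle, hGdim, hGmap⟩ := iff_finrank_eq_sum_drop.mp hG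
  set H : ℕ → Submodule ℂ V := fun j =>
    if j < l₁.length then F j else map (F l₁.length).subtype (G (j - l₁.length))
  have hH_add (i : ℕ) : H (l₁.length + i) = map (F l₁.length).subtype (G i) := by
    simp [H]
  have hH_le {j : ℕ} (hj : j ≤ l₁.length) : H j = F j := by
    rcases hj.lt_or_eq with hj | rfl
    · simp [H, hj]
    · simpa [hG0] using hH_add 0
  refine iff_finrank_eq_sum_drop.mpr ⟨hH_le (Nat.zero_le _) ▸ h0, fun j => ?_, fun j => ?_,
    fun j => ?_⟩ <;>
    obtain hj | ⟨i, rfl⟩ := (lt_or_ge j l₁.length).imp_right Nat.exists_eq_add_of_le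
  · rw [hH_le hj.le, hH_le hj]
    exact hle j
  · rw [add_assoc, hH_add, hH_add]
    exact map_mono (hGle i)
  · rw [hH_le hj.le, hdim]
  · rw [hH_add, finrank_map_subtype_eq, hGdim, List.drop_length_add_append]
  · rw [hH_le hj.le, hH_le hj]
    exact hmap j
  · rw [add_assoc, hH_add, hH_add]
    rintro _ ⟨_, ⟨w, hw, rfl⟩, rfl⟩
    exact ⟨_, hGmap i ⟨w, hw, rfl⟩, rfl⟩

theorem eq_restrict_of_unique (hF : IsStableFlagOfType x (l₁ ++ l₂) F)
    (hinv : ∀ v ∈ F l₁.length, x v ∈ F l₁.length)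
    (huniq : ∀ G, IsStableFlagOfType x (l₁ ++ l₂) G → G = F) {G : ℕ → Submodule ℂ (F l₁.length)}
    (hG : IsStableFlagOfType (x.restrict hinv) l₂ G) :
    G = fun i => comap (F l₁.length).subtype (F (l₁.length + i)) := by
  funext i
  have h := congrFun (huniq _ (hF.extend hinv hG)) (l₁.length + i)
  simp only [add_lt_iff_neg_left, not_lt_zero, if_false, add_tsub_cancel_left] at h
  rw [← h, comap_map_eq_of_injective (injective_subtype _)]

end Restrict

theorem update {parts : List ℕ} (hF : IsStableFlagOfType x parts F) {j : ℕ} {C : Submodule ℂ V}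
    (hlow : F (j + 2) ⊔ map x (F j) ≤ C) (hup : C ≤ F j ⊓ comap x (F (j + 2)))
    (hC : finrank ℂ C = finrank ℂ (F (j + 1))) :
    IsStableFlagOfType x parts (Function.update F (j + 1) C) := by
  obtain ⟨h0, hle, hdim, hmap⟩ := iff_finrank_eq_sum_drop.mp hF
  refine iff_finrank_eq_sum_drop.mpr ⟨by simpa, fun i => ?_, fun i => ?_, fun i => ?_⟩
  · simp only [Function.update_apply, Nat.add_right_cancel_iff]
    split_ifs with h₁ h₂ h₂ <;> subst_vars
    · omega
    · exact hup.trans inf_le_left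
    · exact le_sup_left.trans hlow
    · exact hle i
  · obtain rfl | h := eq_or_ne i (j + 1)
    · rw [Function.update_self, hC, hdim]
    · rw [Function.update_of_ne h, hdim]
  · simp only [Function.update_apply, Nat.add_right_cancel_iff]
    split_ifs with h₁ h₂ h₂ <;> subst_vars
    · omega
    · exact map_le_iff_le_comap.mpr (hup.trans inf_le_right)
    · exact le_sup_right.trans hlow
    · exact hmap i

theorem eq_sup_or_eq_inf_of_unique {parts : List ℕ} (hF : IsStableFlagOfType x parts F)
    (huniq : ∀ G, IsStableFlagOfType x parts G → G = F) (j : ℕ) :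
    F (j + 1) = F (j + 2) ⊔ map x (F j) ∨ F (j + 1) = F j ⊓ comap x (F (j + 2)) := by
  have ⟨_, hle, _, _, hmap⟩ := hF
  refine eq_or_eq_of_forall_finrank_eq (sup_le (hle _) (hmap j))
    (le_inf (hle j) (map_le_iff_le_comap.mp (hmap _))) fun C hlow hup hC => ?_
  simpa using congrFun (huniq _ (hF.update hlow hup hC)) (j + 1)

theorem finrank_ker_eq_head_of_unique {d₀ : ℕ} {d : List ℕ}
    (hF : IsStableFlagOfType x (d₀ :: d) F)
    (huniq : ∀ G, IsStableFlagOfType x (d₀ :: d) G → G = F) (hd : ∀ p ∈ d, p ≤ d₀)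
    (hinv : ∀ v ∈ F 1, x v ∈ F 1)
    (hker : finrank ℂ (ker (x.restrict hinv)) = (d.take 1).sum) :
    finrank ℂ (ker x) = d₀ := by
  obtain ⟨h0, -, hdim, hmap⟩ := iff_finrank_eq_sum_drop.mp hF
  have hlow := hF.sum_take_le_finrank_ker_pow 1
  rw [pow_one, List.take_succ_cons, List.take_zero, List.sum_cons, List.sum_nil] at hlow
  have hrange : range x ≤ F 1 := by simpa using hF.range_pow_le 1
  rcases hF.eq_sup_or_eq_inf_of_unique huniq 0 with hsup | hinf
  · have himage : map x (F 1) = F 2 := by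
      refine eq_of_le_of_finrank_le (hmap 1) ?_
      have hrank := (x.domRestrict (F 1)).finrank_range_add_finrank_ker
      rw [range_domRestrict, ker_domRestrict, ← ker_restrict hinv, hker, hdim 1] at hrank
      have := d.sum_take_add_sum_drop 1
      rw [hdim 2]
      simp only [List.drop_succ_cons, List.drop_zero] at hrank ⊢
      omega
    have hF1 : F 1 = range x := by
      refine le_antisymm ?_ hrange
      rw [hsup, h0, Submodule.map_top, ← himage]
      exact sup_le map_le_range le_rfl
    have hrank := x.finrank_range_add_finrank_ker
    rw [← hF1, hdim 1, hF.finrank_eq_sum] at hrank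
    simp only [List.drop_succ_cons, List.drop_zero, List.sum_cons] at hrank
    omega
  · have hker_le : ker x ≤ F 1 := by
      rw [hinf, h0, top_inf_eq]
      intro v hv
      simp [mem_ker.mp hv]
    have hkerx : finrank ℂ (ker x) = finrank ℂ (ker (x.restrict hinv)) := by
      rw [ker_restrict, (comapSubtypeEquivOfLe hker_le).finrank_eq]
    have : (d.take 1).sum ≤ d₀ := by cases d <;> simp_all
    omega

theorem finrank_ker_pow_eq_sum_take_of_unique {d : List ℕ} (hsort : d.Pairwise (· ≥ ·))
    (hF : IsStableFlagOfType x d F) (huniq : ∀ G, IsStableFlagOfType x d G → G = F) (k : ℕ) :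
    finrank ℂ (ker (x ^ k)) = (d.take k).sum := by
  induction d generalizing V k with
  | nil =>
    simpa [hF.finrank_eq_sum] using (ker (x ^ k)).finrank_le
  | cons d₀ d ih =>
    cases k with
    | zero => simp [Module.End.one_eq_id]
    | succ k =>
      have hrange : range x ≤ F 1 := by simpa using hF.range_pow_le 1
      have hinv : ∀ v ∈ F 1, x v ∈ F 1 := fun v _ => hrange (mem_range_self x v)
      have ih' : ∀ k, finrank ℂ (ker (x.restrict hinv ^ k)) = (d.take k).sum :=
        ih (List.pairwise_cons.mp hsort).2 (hF.restrict (l₁ := [d₀]) hinv)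
          fun G hG => hF.eq_restrict_of_unique (l₁ := [d₀]) hinv huniq hG
      have hker := hF.finrank_ker_eq_head_of_unique huniq (List.pairwise_cons.mp hsort).1 hinv
        (ih' 1)
      refine le_antisymm ?_ (hF.sum_take_le_finrank_ker_pow _)
      calc finrank ℂ (ker (x ^ (k + 1)))
          ≤ finrank ℂ (ker x) + finrank ℂ (ker (x.restrict hinv ^ k)) :=
            x.finrank_ker_pow_succ_le hrange k
        _ = ((d₀ :: d).take (k + 1)).sum := by
            rw [hker, ih' k, List.take_succ_cons, List.sum_cons]

end IsStableFlagOfType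

theorem restriction_jordan_type_of_unique_flag_general
    {V : Type} [AddCommGroup V] [Module ℂ V] [FiniteDimensional ℂ V]
    (x : Module.End ℂ V)
    (l₁ l₂ : List ℕ)
    (hl₂sorted : l₂.Pairwise (· ≥ ·))
    (F : ℕ → Submodule ℂ V)
    (hF : IsStableFlagOfType x (l₁ ++ l₂) F)
    (huniq : ∀ G : ℕ → Submodule ℂ V, IsStableFlagOfType x (l₁ ++ l₂) G → G = F)
    (hinv : ∀ v ∈ F l₁.length, x v ∈ F l₁.length) :
    ∀ k, finrank ℂ (LinearMap.ker ((x.restrict hinv) ^ k)) = (l₂.take k).sum :=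
  (hF.restrict hinv).finrank_ker_pow_eq_sum_take_of_unique hl₂sorted
    fun _ hG => hF.eq_restrict_of_unique hinv huniq hG

/-- Let `x` be a nilpotent endomorphism and `(λ₁, λ₂)` a pair of
partitions (given by their part lists `l₁`, `l₂`, sorted decreasingly, with
positive parts).  Suppose `F` is a flag of type `(λ₁, λ₂)` stable under `x`
(`x (V_j) ⊆ V_{j+1}`) and that this flag is unique.  Then the restriction of
`x` to the middle subspace `V₂ = F (length l₁)` has Jordan type `λ₂^⊥`:
equivalently, `dim ker ((x|_{V₂})^k)` is the sum of the `k` largest parts of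
`λ₂` for every `k`. -/
theorem restriction_jordan_type_of_unique_flag
    {V : Type} [AddCommGroup V] [Module ℂ V] [FiniteDimensional ℂ V]
    (x : Module.End ℂ V) (hnil : IsNilpotent x)
    (l₁ l₂ : List ℕ)
    (hl₁sorted : l₁.Pairwise (· ≥ ·)) (hl₁pos : ∀ p ∈ l₁, 0 < p)
    (hl₂sorted : l₂.Pairwise (· ≥ ·)) (hl₂pos : ∀ p ∈ l₂, 0 < p)
    (F : ℕ → Submodule ℂ V)
    (hF : IsStableFlagOfType x (l₁ ++ l₂) F)
    (huniq : ∀ G : ℕ → Submodule ℂ V, IsStableFlagOfType x (l₁ ++ l₂) G → G = F)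
    (hinv : ∀ v ∈ F l₁.length, x v ∈ F l₁.length) :
    ∀ k, finrank ℂ (LinearMap.ker ((x.restrict hinv) ^ k)) = (l₂.take k).sum :=
  restriction_jordan_type_of_unique_flag_general x l₁ l₂ hl₂sorted F hF huniq hinv
end

section
/- A nilpotent endomorphism x of an n-dimensional vector space V fixes a unique complete flag (V = V_1 ⊃ ⋯ ⊃ V_{n+1} = 0 with x(V_l) ⊆ V_{l+1}) if and only if x is regular nilpotent, in which case V_l = im(x^{l−1}). -/
/-!
Write a flag as `V = W_0 ⊃ W_1 ⊃ ⋯ ⊃ W_n = 0`. Compatibility gives `im (x ^ l) ≤ W_l`. As long as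
`x ^ l ≠ 0` the images `im (x ^ l)` strictly decrease, since `x` is nilpotent on each of them; so
if `x ^ (n - 1) ≠ 0` they have dimension `n - l`, which pins every compatible flag down to
`W_l = im (x ^ l)`. Conversely, Sylvester's inequality `n ≤ rk (x ^ l) + l · dim ker x` shows that
`x ^ (n - 1) = 0` forces `dim ker x ≥ 2`, so `im x` lies in two distinct hyperplanes. Any
hyperplane `H ⊇ im x` is `x`-stable, and choosing successively a hyperplane containing the image
of the previous step extends it to a compatible flag with `W_1 = H`; this gives two different
compatible flags.
-/

open Module

/-- A complete flag `V = W_0 ⊃ W_1 ⊃ ⋯ ⊃ W_n = 0` in an `n`-dimensional space,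
encoded as a decreasing chain of submodules with one-dimensional successive
quotients (indexed from `0`, so `W l` has dimension `n - l`). -/
def IsCompleteFlag {V : Type} [AddCommGroup V] [Module ℂ V] (n : ℕ)
    (W : ℕ → Submodule ℂ V) : Prop :=
  W 0 = ⊤ ∧ (∀ l, W (l + 1) ≤ W l) ∧ (∀ l, n ≤ l → W l = ⊥) ∧
    (∀ l, finrank ℂ (W l) = n - l)

open Submodule LinearMap

section LinearAlgebra

variable {K V : Type*} [DivisionRing K] [AddCommGroup V] [Module K V]

theorem Submodule.finrank_add_one_of_covBy [FiniteDimensional K V] {H U : Submodule K V}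
    (h : H ⋖ U) : finrank K H + 1 = finrank K U := by
  obtain ⟨v, hvU, hvH⟩ := SetLike.exists_of_lt h.lt
  have hsup : H ⊔ K ∙ v = U := by
    have hlt : H < H ⊔ K ∙ v :=
      left_lt_sup.2 fun hle ↦ hvH (hle (mem_span_singleton_self v))
    exact (sup_le h.le ((span_singleton_le_iff_mem _ _).2 hvU)).eq_of_not_lt (h.2 hlt)
  rw [← hsup, finrank_sup_span_singleton hvH]

theorem Submodule.exists_ne_covBy_top [FiniteDimensional K V] {R : Submodule K V}
    (h : finrank K R + 2 ≤ finrank K V) :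
    ∃ H₁ H₂ : Submodule K V, H₁ ≠ H₂ ∧ R ≤ H₁ ∧ R ≤ H₂ ∧ H₁ ⋖ ⊤ ∧ H₂ ⋖ ⊤ := by
  obtain ⟨H₁, hR₁, h₁⟩ :=
    exists_le_covBy_of_lt (lt_top_of_finrank_lt_finrank (s := R) (by omega))
  obtain ⟨v, -, hv⟩ := SetLike.exists_of_lt h₁.lt
  have hlt : R ⊔ K ∙ v < ⊤ := by
    refine lt_top_of_finrank_lt_finrank ?_
    have := finrank_add_le_finrank_add_finrank R (K ∙ v)
    have := finrank_span_le_card (R := K) {v}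
    simp only [Set.toFinset_singleton, Finset.card_singleton] at this
    omega
  obtain ⟨H₂, hR₂, h₂⟩ := exists_le_covBy_of_lt hlt
  refine ⟨H₁, H₂, ?_, hR₁, le_sup_left.trans hR₂, h₁, h₂⟩
  rintro rfl
  exact hv (hR₂ (mem_sup_right (mem_span_singleton_self v)))

theorem Submodule.map_lt_of_isNilpotent {x : Module.End K V} (hx : IsNilpotent x)
    {U : Submodule K V} (hU : U.map x ≤ U) (hU₀ : U ≠ ⊥) : U.map x < U := by
  refine hU.lt_of_ne fun hfix ↦ hU₀ ?_
  obtain ⟨k, hk⟩ := hx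
  have hpow : ∀ m, U.map (x ^ m) = U := by
    intro m
    induction m with
    | zero => rw [pow_zero, Module.End.one_eq_id, map_id]
    | succ m ih => rw [pow_succ, Module.End.mul_eq_comp, map_comp, hfix, ih]
  rw [← hpow k, hk, Submodule.map_zero]

theorem LinearMap.range_pow_succ (x : Module.End K V) (l : ℕ) :
    range (x ^ (l + 1)) = (range (x ^ l)).map x := by
  rw [pow_succ', Module.End.mul_eq_comp, range_comp]

theorem LinearMap.range_pow_succ_lt {x : Module.End K V} (hx : IsNilpotent x) {l : ℕ}
    (h : x ^ l ≠ 0) : range (x ^ (l + 1)) < range (x ^ l) := by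
  have hle : range (x ^ (l + 1)) ≤ range (x ^ l) := by
    rw [pow_succ, Module.End.mul_eq_comp]
    exact range_comp_le_range _ _
  rw [range_pow_succ] at hle ⊢
  exact map_lt_of_isNilpotent hx hle (range_eq_bot.not.2 h)

theorem LinearMap.add_one_le_finrank_range_pow [FiniteDimensional K V] {x : Module.End K V}
    (hx : IsNilpotent x) {l k : ℕ} (h : x ^ (l + k) ≠ 0) :
    k + 1 ≤ finrank K (range (x ^ l)) := by
  induction k generalizing l with
  | zero => exact Nat.one_le_iff_ne_zero.2 fun h₀ ↦ h (range_eq_bot.1 (finrank_eq_zero.1 h₀))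
  | succ k ih =>
    have hl : x ^ l ≠ 0 := fun h₀ ↦ h (by rw [pow_add, h₀, zero_mul])
    have := ih (l := l + 1) (by rwa [add_right_comm, add_assoc])
    have := finrank_lt_finrank_of_lt (range_pow_succ_lt hx hl)
    omega

theorem LinearMap.finrank_sub_le_finrank_range_pow [FiniteDimensional K V]
    {x : Module.End K V} (hx : IsNilpotent x) (hreg : x ^ (finrank K V - 1) ≠ 0) (l : ℕ) :
    finrank K V - l ≤ finrank K (range (x ^ l)) := by
  rcases le_or_gt (finrank K V) l with hl | hl
  · omega
  · have := add_one_le_finrank_range_pow hx (l := l) (k := finrank K V - 1 - l)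
      (by rwa [Nat.add_sub_cancel' (by omega)])
    omega

theorem LinearMap.finrank_le_finrank_map_add_finrank_ker [FiniteDimensional K V]
    {V₂ : Type*} [AddCommGroup V₂] [Module K V₂] (f : V →ₗ[K] V₂) (U : Submodule K V) :
    finrank K U ≤ finrank K (U.map f) + finrank K (ker f) := by
  have hrank := (f.domRestrict U).finrank_range_add_finrank_ker
  rw [range_domRestrict, ker_domRestrict] at hrank
  have hker : finrank K (comap U.subtype (ker f)) ≤ finrank K (ker f) := by
    rw [← finrank_map_subtype_eq, map_comap_subtype]
    exact finrank_mono inf_le_right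
  omega

theorem LinearMap.finrank_le_finrank_range_pow_add_mul [FiniteDimensional K V]
    (x : Module.End K V) (l : ℕ) :
    finrank K V ≤ finrank K (range (x ^ l)) + l * finrank K (ker x) := by
  induction l with
  | zero => rw [pow_zero, Module.End.one_eq_id, range_id, finrank_top]; omega
  | succ l ih =>
    have := finrank_le_finrank_map_add_finrank_ker x (range (x ^ l))
    rw [← range_pow_succ] at this
    rw [add_one_mul]
    omega

theorem LinearMap.finrank_range_add_two_le_of_pow_eq_zero [FiniteDimensional K V]
    {x : Module.End K V} (hV : 0 < finrank K V) (h : x ^ (finrank K V - 1) = 0) :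
    finrank K (range x) + 2 ≤ finrank K V := by
  have hsyl := finrank_le_finrank_range_pow_add_mul x (finrank K V - 1)
  rw [h, range_zero, finrank_bot, zero_add] at hsyl
  have hker : 2 ≤ finrank K (ker x) := by
    by_contra! hk
    have := Nat.mul_le_mul_left (finrank K V - 1) (Nat.le_of_lt_succ hk)
    omega
  have := x.finrank_range_add_finrank_ker
  omega

theorem Submodule.exists_chain_finrank_sub_of_isNilpotent [FiniteDimensional K V]
    {x : Module.End K V} (hx : IsNilpotent x) (U : Submodule K V) (hU : U.map x ≤ U) :
    ∃ W : ℕ → Submodule K V, W 0 = U ∧ (∀ l, W (l + 1) ≤ W l) ∧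
      (∀ l, finrank K (W l) = finrank K U - l) ∧ ∀ l, (W l).map x ≤ W (l + 1) := by
  induction U using WellFoundedLT.induction with
  | _ U ih =>
  rcases eq_or_ne U ⊥ with rfl | hU₀
  · exact ⟨fun _ ↦ ⊥, rfl, fun _ ↦ le_rfl, fun _ ↦ by simp, fun _ ↦ by simp⟩
  obtain ⟨H, hxH, hHU⟩ := exists_le_covBy_of_lt (map_lt_of_isNilpotent hx hU hU₀)
  obtain ⟨W, rfl, hanti, hrank, hmap⟩ := ih _ hHU.lt ((map_mono hHU.le).trans hxH)
  have hdim := finrank_add_one_of_covBy hHU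
  refine ⟨fun | 0 => U | l + 1 => W l, rfl, ?_, ?_, ?_⟩
  · rintro (_ | l)
    exacts [hHU.le, hanti l]
  · rintro (_ | l)
    · rfl
    · show finrank K (W l) = _
      rw [hrank l]
      omega
  · rintro (_ | l)
    exacts [hxH, hmap l]

end LinearAlgebra

section Flags

variable {V : Type} [AddCommGroup V] [Module ℂ V]

def IsCompatibleFlag (n : ℕ) (x : Module.End ℂ V) (W : ℕ → Submodule ℂ V) : Prop :=
  IsCompleteFlag n W ∧ ∀ l, (W l).map x ≤ W (l + 1)

theorem isCompatibleFlag_of_finrank [FiniteDimensional ℂ V] {n : ℕ} {x : Module.End ℂ V}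
    {W : ℕ → Submodule ℂ V} (h₀ : W 0 = ⊤) (hanti : ∀ l, W (l + 1) ≤ W l)
    (hrank : ∀ l, finrank ℂ (W l) = n - l) (hmap : ∀ l, (W l).map x ≤ W (l + 1)) :
    IsCompatibleFlag n x W :=
  ⟨⟨h₀, hanti, fun l hl ↦ finrank_eq_zero.1 (by rw [hrank]; omega), hrank⟩, hmap⟩

theorem exists_isCompatibleFlag [FiniteDimensional ℂ V] {x : Module.End ℂ V}
    (hx : IsNilpotent x) : ∃ W, IsCompatibleFlag (finrank ℂ V) x W := by
  obtain ⟨W, h₀, hanti, hrank, hmap⟩ := exists_chain_finrank_sub_of_isNilpotent hx ⊤ le_top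
  rw [finrank_top] at hrank
  exact ⟨W, isCompatibleFlag_of_finrank h₀ hanti hrank hmap⟩

theorem exists_isCompatibleFlag_of_range_le [FiniteDimensional ℂ V] {x : Module.End ℂ V}
    (hx : IsNilpotent x) {H : Submodule ℂ V} (hH : H ⋖ ⊤) (hxH : range x ≤ H) :
    ∃ W, IsCompatibleFlag (finrank ℂ V) x W ∧ W 1 = H := by
  obtain ⟨W, rfl, hanti, hrank, hmap⟩ :=
    exists_chain_finrank_sub_of_isNilpotent hx _ (map_le_range.trans hxH)
  have hdim := finrank_add_one_of_covBy hH
  rw [finrank_top] at hdim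
  refine ⟨fun | 0 => ⊤ | l + 1 => W l, isCompatibleFlag_of_finrank rfl ?_ ?_ ?_, rfl⟩
  · rintro (_ | l)
    exacts [le_top, hanti l]
  · rintro (_ | l)
    · exact finrank_top ℂ V
    · show finrank ℂ (W l) = _
      rw [hrank l]
      omega
  · rintro (_ | l)
    exacts [map_top x ▸ hxH, hmap l]

theorem IsCompatibleFlag.range_pow_le {n : ℕ} {x : Module.End ℂ V} {W : ℕ → Submodule ℂ V}
    (hW : IsCompatibleFlag n x W) (l : ℕ) : range (x ^ l) ≤ W l := by
  induction l with
  | zero => simp [hW.1.1]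
  | succ l ih => exact range_pow_succ x l ▸ (map_mono ih).trans (hW.2 l)

theorem IsCompatibleFlag.eq_range_pow [FiniteDimensional ℂ V] {x : Module.End ℂ V}
    {W : ℕ → Submodule ℂ V} (hW : IsCompatibleFlag (finrank ℂ V) x W) (hx : IsNilpotent x)
    (hreg : x ^ (finrank ℂ V - 1) ≠ 0) (l : ℕ) : W l = range (x ^ l) := by
  refine (eq_of_le_of_finrank_le (hW.range_pow_le l) ?_).symm
  obtain ⟨⟨-, -, -, hrank⟩, -⟩ := hW
  rw [hrank l]
  exact finrank_sub_le_finrank_range_pow hx hreg l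

end Flags

/-- A nilpotent endomorphism `x` of an `n`-dimensional space `V`
fixes a unique complete flag (i.e. a complete flag with `x (V_l) ⊆ V_{l+1}`)
if and only if `x` is regular nilpotent (`x^(n-1) ≠ 0`), in which case the flag
is given by `V_l = im (x^l)` (in our 0-indexed notation). -/
theorem unique_flag_iff_regular_nilpotent
    {V : Type} [AddCommGroup V] [Module ℂ V] (n : ℕ) (hn : 0 < n)
    (hdim : finrank ℂ V = n)
    (x : Module.End ℂ V) (hnil : IsNilpotent x) :
    ((∃! W : ℕ → Submodule ℂ V,
        IsCompleteFlag n W ∧ ∀ l, Submodule.map x (W l) ≤ W (l + 1))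
      ↔ x ^ (n - 1) ≠ 0) ∧
    (x ^ (n - 1) ≠ 0 →
      ∀ W : ℕ → Submodule ℂ V,
        (IsCompleteFlag n W ∧ ∀ l, Submodule.map x (W l) ≤ W (l + 1)) →
        ∀ l, W l = LinearMap.range (x ^ l)) := by
  subst hdim
  have : FiniteDimensional ℂ V := .of_finrank_pos hn
  have hrange (hreg : x ^ (finrank ℂ V - 1) ≠ 0) (W : ℕ → Submodule ℂ V)
      (hW : IsCompatibleFlag (finrank ℂ V) x W) (l : ℕ) : W l = range (x ^ l) :=
    hW.eq_range_pow hnil hreg l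
  refine ⟨⟨?_, fun hreg ↦ ?_⟩, hrange⟩
  · rintro ⟨W, -, huniq⟩ hsing
    obtain ⟨H₁, H₂, hne, hx₁, hx₂, h₁, h₂⟩ :=
      exists_ne_covBy_top (finrank_range_add_two_le_of_pow_eq_zero hn hsing)
    obtain ⟨W₁, hW₁, rfl⟩ := exists_isCompatibleFlag_of_range_le hnil h₁ hx₁
    obtain ⟨W₂, hW₂, rfl⟩ := exists_isCompatibleFlag_of_range_le hnil h₂ hx₂
    exact hne (by rw [huniq W₁ hW₁, huniq W₂ hW₂])
  · obtain ⟨W, hW⟩ := exists_isCompatibleFlag hnil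
    exact ⟨W, hW, fun W' hW' ↦ funext fun l ↦
      (hrange hreg W' hW' l).trans (hrange hreg W hW l).symm⟩
end
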